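/- arXiv:2206.06452 — 8 statements merged into one kernel-verified Lean document; each statement's English description precedes it below -/
import Mathlib

section
/- Let x₁,…,x_k and y₁,…,y_k be points in ℝ^d, and suppose the set Γ = {(x₁,y₁),…,(x_k,y_k)} is cyclically monotone. Then the coupling π = (1/k)∑ᵢ δ(xᵢ,yᵢ) is an optimal transport plan for the quadratic cost between μ = (1/k)∑ᵢ δ(xᵢ) and ν = (1/k)∑ᵢ δ(yᵢ): for every coupling γ of μ and ν, ∫‖x−y‖² dπ ≤ ∫‖x−y‖² dγ. -/
open MeasureTheory ProbabilityTheory Metric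
open scoped ENNReal NNReal

noncomputable section

abbrev Ed (d : ℕ) := EuclideanSpace ℝ (Fin d)

/-- Convolution of two measures on `ℝ^d`. -/
def mconv {d : ℕ} (μ ν : Measure (Ed d)) : Measure (Ed d) :=
  (μ.prod ν).map (fun p => p.1 + p.2)

/-- The set of couplings of `μ` and `ν`. -/
def Couplings {d : ℕ} (μ ν : Measure (Ed d)) : Set (Measure (Ed d × Ed d)) :=
  {π | π.map Prod.fst = μ ∧ π.map Prod.snd = ν}

/-- Quadratic transport cost of a plan. -/
def cost {d : ℕ} (π : Measure (Ed d × Ed d)) : ℝ := ∫ p, ‖p.1 - p.2‖ ^ 2 ∂π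

/-- Squared 2-Wasserstein distance. -/
def W2sq {d : ℕ} (μ ν : Measure (Ed d)) : ℝ := sInf (cost '' Couplings μ ν)

/-- 2-Wasserstein distance. -/
def W2 {d : ℕ} (μ ν : Measure (Ed d)) : ℝ := Real.sqrt (W2sq μ ν)

/-- The isotropic centered Gaussian measure `N_σ` on `ℝ^d` with covariance `σ² I`. -/
def gauss (d : ℕ) (σ : ℝ) : Measure (Ed d) :=
  (Measure.pi fun _ : Fin d => gaussianReal 0 (Real.toNNReal (σ ^ 2))).map
    (⇑(EuclideanSpace.equiv (Fin d) ℝ).symm)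

/-- Uniform discrete measure on `k` (possibly repeated) atoms. -/
def discUnif {d k : ℕ} (x : Fin k → Ed d) : Measure (Ed d) :=
  ((k : ℝ≥0∞)⁻¹) • ∑ i, Measure.dirac (x i)

/-- The matching coupling `(1/k) ∑ δ(xᵢ, yᵢ)`. -/
def matchPlan {d k : ℕ} (x y : Fin k → Ed d) : Measure (Ed d × Ed d) :=
  ((k : ℝ≥0∞)⁻¹) • ∑ i, Measure.dirac (x i, y i)

/-- `f` is a positive residual function on `[k]`. -/
def PosResidual {k : ℕ} (f : Fin k → Fin k → ℝ) : Prop :=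
  (∀ i, f i i = 0) ∧ (∀ i j, i ≠ j → 0 < f i j) ∧ (∀ i j, f i j = f j i)

/-- `Γ = {(xᵢ, yᵢ)}` is `f`-strongly cyclically monotone. -/
def StrongCM {d k : ℕ} (x y : Fin k → Ed d) (f : Fin k → Fin k → ℝ) : Prop :=
  ∀ (n : ℕ) (c : Fin (n + 1) → Fin k), (∀ i, c i ≠ c (i + 1)) →
    ∑ i, (inner ℝ (x (c i)) (y (c i) - y (c (i + 1))) : ℝ) ≥ ∑ i, f (c i) (c (i + 1))

/-- `Γ = {(xᵢ, yᵢ)}` is `ε`-robust. -/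
def Robust {d k : ℕ} (x y : Fin k → Ed d) (ε : ℝ) : Prop :=
  ∀ (n : ℕ) (c : Fin (n + 1) → Fin k), Function.Injective c →
    ∀ α : Fin (n + 1) → Ed d, (∀ i, ‖α i‖ ≤ ε) →
      ∑ i, ‖x (c i) - y (c i)‖ ^ 2 ≤
        ∑ i, ‖(x (c i) + α i) - (y (c (i + 1)) + α (i + 1))‖ ^ 2

/-- The robustness radius `R(Γ)`. -/
def RGamma {d k : ℕ} (x y : Fin k → Ed d) : ℝ :=
  sSup {ε : ℝ | 0 ≤ ε ∧ Robust x y ε}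

/-- Maximal cyclic improvement `G(M)` under perturbations of size at most `M`. -/
def Gfun {d k : ℕ} (x y : Fin k → Ed d) (M : ℝ) : ℝ :=
  sSup {v : ℝ | ∃ (n : ℕ) (c : Fin (n + 1) → Fin k), Function.Injective c ∧
    ∃ α : Fin (n + 1) → Ed d, (∀ i, ‖α i‖ ≤ M) ∧
      v = ∑ i, ‖x (c i) - y (c i)‖ ^ 2 -
          ∑ i, ‖(x (c i) + α i) - (y (c (i + 1)) + α (i + 1))‖ ^ 2}

/-- A set is cyclically monotone for the quadratic cost. -/
def CyclMono {d : ℕ} (S : Set (Ed d × Ed d)) : Prop :=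
  ∀ (n : ℕ) (a b : Fin (n + 1) → Ed d), (∀ i, (a i, b i) ∈ S) →
    ∑ i, ‖a i - b i‖ ^ 2 ≤ ∑ i, ‖a i - b (i + 1)‖ ^ 2


section Aux

open Finset

lemma cyc_eq {k n : ℕ} (w : Fin k → Fin k → ℝ) (c : Fin (n+1) → Fin k) :
    ∑ i : Fin (n+1), w (c i) (c (i+1)) =
      (∑ t : Fin n, w (c t.castSucc) (c t.succ)) + w (c (Fin.last n)) (c 0) := by
  rw [Fin.sum_univ_castSucc]
  congr 1
  · exact Finset.sum_congr rfl fun t _ => by rw [Fin.coeSucc_eq_succ]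
  · rw [Fin.last_add_one]

lemma snoc_edge_sum {k n : ℕ} (w : Fin k → Fin k → ℝ) (c : Fin (n+1) → Fin k) (a : Fin k) :
    ∑ t : Fin (n+1), w ((Fin.snoc c a : Fin (n+2) → Fin k) t.castSucc)
        ((Fin.snoc c a : Fin (n+2) → Fin k) t.succ)
      = (∑ s : Fin n, w (c s.castSucc) (c s.succ)) + w (c (Fin.last n)) a := by
  rw [Fin.sum_univ_castSucc]
  congr 1
  · exact Finset.sum_congr rfl fun s _ => by
      rw [Fin.succ_castSucc, Fin.snoc_castSucc, Fin.snoc_castSucc]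
  · rw [Fin.succ_last, Fin.snoc_last, Fin.snoc_castSucc]

lemma exists_potential {k : ℕ} (w : Fin k → Fin k → ℝ) (hk : 0 < k)
    (hc : ∀ (n : ℕ) (c : Fin (n + 1) → Fin k), ∑ i, w (c i) (c (i + 1)) ≤ 0) :
    ∃ ψ : Fin k → ℝ, ∀ i j, ψ i + w i j ≤ ψ j := by
  set z : Fin k := ⟨0, hk⟩ with hz
  set S : Fin k → Set ℝ := fun j => {v | ∃ (n : ℕ) (c : Fin (n+1) → Fin k), c 0 = z ∧
    v = (∑ t : Fin n, w (c t.castSucc) (c t.succ)) + w (c (Fin.last n)) j} with hS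
  have hne : ∀ j, (S j).Nonempty := by
    intro j
    exact ⟨w z j, 0, fun _ => z, rfl, by simp⟩
  have hbdd : ∀ j, BddAbove (S j) := by
    intro j
    refine ⟨-w j z, fun v hv => ?_⟩
    obtain ⟨n, c, hc0, rfl⟩ := hv
    have h1 := hc (n+1) (Fin.snoc c j)
    rw [cyc_eq w (Fin.snoc c j), snoc_edge_sum w c j] at h1
    have h2 : (Fin.snoc c j : Fin (n+2) → Fin k) (Fin.last (n+1)) = j := Fin.snoc_last _ _
    have h3 : (Fin.snoc c j : Fin (n+2) → Fin k) 0 = z := by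
      rw [show (0 : Fin (n+2)) = Fin.castSucc 0 by rfl, Fin.snoc_castSucc, hc0]
    rw [h2, h3] at h1
    linarith
  refine ⟨fun j => sSup (S j), fun i j => ?_⟩
  have step : ∀ v ∈ S i, v + w i j ∈ S j := by
    rintro v ⟨n, c, hc0, rfl⟩
    refine ⟨n+1, Fin.snoc c i, ?_, ?_⟩
    · rw [show (0 : Fin (n+2)) = Fin.castSucc 0 by rfl, Fin.snoc_castSucc, hc0]
    · rw [snoc_edge_sum w c i, Fin.snoc_last]
  have key : sSup (S i) ≤ sSup (S j) - w i j := by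
    refine csSup_le (hne i) fun v hv => ?_
    have := le_csSup (hbdd j) (step v hv)
    linarith
  linarith

lemma cyc_nonpos {d k : ℕ} (x y : Fin k → Ed d)
    (h : CyclMono {p : Ed d × Ed d | ∃ i : Fin k, p = (x i, y i)})
    (n : ℕ) (c : Fin (n + 1) → Fin k) :
    ∑ i, ((inner ℝ (x (c i)) (y (c (i+1))) : ℝ) - (inner ℝ (x (c i)) (y (c i)) : ℝ)) ≤ 0 := by
  have H := h n (fun t => x (c t)) (fun t => y (c t)) (fun t => ⟨c t, rfl⟩)
  simp only [norm_sub_sq_real] at H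
  rw [Finset.sum_add_distrib, Finset.sum_add_distrib, Finset.sum_sub_distrib,
    Finset.sum_sub_distrib] at H
  have hy : ∑ i : Fin (n+1), ‖y (c (i+1))‖ ^ 2 = ∑ i : Fin (n+1), ‖y (c i)‖ ^ 2 :=
    Fintype.sum_equiv (Equiv.addRight (1 : Fin (n+1)))
      (fun i => ‖y (c (i+1))‖ ^ 2) (fun i => ‖y (c i)‖ ^ 2) (fun i => rfl)
  rw [hy] at H
  rw [Finset.sum_sub_distrib]
  have h1 : ∑ i : Fin (n+1), 2 * (inner ℝ (x (c i)) (y (c i)) : ℝ)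
      = 2 * ∑ i : Fin (n+1), (inner ℝ (x (c i)) (y (c i)) : ℝ) := by rw [Finset.mul_sum]
  have h2 : ∑ i : Fin (n+1), 2 * (inner ℝ (x (c i)) (y (c (i+1))) : ℝ)
      = 2 * ∑ i : Fin (n+1), (inner ℝ (x (c i)) (y (c (i+1))) : ℝ) := by rw [Finset.mul_sum]
  linarith

lemma integrable_dirac'' {α E : Type*} [MeasurableSpace α] [MeasurableSingletonClass α]
    [NormedAddCommGroup E] {f : α → E} (hf : MeasureTheory.StronglyMeasurable f) (a : α) :
    MeasureTheory.Integrable f (MeasureTheory.Measure.dirac a) := by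
  refine ⟨hf.aestronglyMeasurable, ?_⟩
  rw [MeasureTheory.HasFiniteIntegral]
  rw [MeasureTheory.lintegral_dirac]
  exact ENNReal.coe_lt_top

end Aux

/-- cyclically monotone matchings are optimal plans. -/
theorem stmt2 {d k : ℕ} (x y : Fin k → Ed d)
    (h : CyclMono {p : Ed d × Ed d | ∃ i : Fin k, p = (x i, y i)}) :
    ∀ γ ∈ Couplings (discUnif x) (discUnif y), cost (matchPlan x y) ≤ cost γ := by
  rintro γ ⟨hγ1, hγ2⟩
  rcases Nat.eq_zero_or_pos k with hk0 | hk
  · -- degenerate case k = 0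
    subst hk0
    have hμ : discUnif x = 0 := by simp [discUnif]
    have hγ0 : γ = 0 := by
      have h1 : γ.map Prod.fst Set.univ = 0 := by rw [hγ1, hμ]; simp
      rw [Measure.map_apply measurable_fst MeasurableSet.univ] at h1
      simp only [Set.preimage_univ] at h1
      exact Measure.measure_univ_eq_zero.mp h1
    have hπ : matchPlan x y = 0 := by simp [matchPlan]
    rw [hγ0, hπ]
  · -- main case k > 0
    classical
    have hkR : (0:ℝ) < (k:ℝ) := by exact_mod_cast hk
    have hkne : ((k:ℝ≥0∞)) ≠ 0 := by exact_mod_cast Nat.cast_ne_zero.mpr hk.ne'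
    have hkinv : ((k:ℝ≥0∞)⁻¹).toReal = (k:ℝ)⁻¹ := by
      rw [ENNReal.toReal_inv]; simp
    set f : Ed d × Ed d → ℝ := fun p => ‖p.1 - p.2‖ ^ 2 with hfdef
    have hfc : Continuous f := (continuous_fst.sub continuous_snd).norm.pow 2
    set Fx : Finset (Ed d) := Finset.image x Finset.univ with hFxdef
    set Fy : Finset (Ed d) := Finset.image y Finset.univ with hFydef
    -- cost of the matching plan
    have hmatch : cost (matchPlan x y) = (k:ℝ)⁻¹ * ∑ i, ‖x i - y i‖ ^ 2 := by
      rw [cost, matchPlan, integral_smul_measure,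
        integral_finset_sum_measure (fun i _ => integrable_dirac'' hfc.stronglyMeasurable _)]
      simp only [integral_dirac, hkinv, smul_eq_mul]
      rfl
    -- marginals
    have hmargx : ∀ s : Set (Ed d), MeasurableSet s → γ (Prod.fst ⁻¹' s) = discUnif x s := by
      intro s hs; rw [← hγ1, Measure.map_apply measurable_fst hs]
    have hmargy : ∀ s : Set (Ed d), MeasurableSet s → γ (Prod.snd ⁻¹' s) = discUnif y s := by
      intro s hs; rw [← hγ2, Measure.map_apply measurable_snd hs]
    have hdiscc : ∀ (z : Fin k → Ed d) (s : Set (Ed d)),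
        discUnif z s = (k:ℝ≥0∞)⁻¹ * ∑ i, s.indicator 1 (z i) := by
      intro z s
      rw [discUnif, Measure.smul_apply, Measure.finset_sum_apply]
      simp [Measure.dirac_apply, smul_eq_mul]
    have hFx0 : discUnif x ((↑Fx : Set (Ed d))ᶜ) = 0 := by
      rw [hdiscc]
      have : ∀ i, ((↑Fx : Set (Ed d))ᶜ).indicator (1 : Ed d → ℝ≥0∞) (x i) = 0 := fun i =>
        Set.indicator_of_notMem (by simp [hFxdef]) _
      simp [this]
    have hFy0 : discUnif y ((↑Fy : Set (Ed d))ᶜ) = 0 := by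
      rw [hdiscc]
      have : ∀ i, ((↑Fy : Set (Ed d))ᶜ).indicator (1 : Ed d → ℝ≥0∞) (y i) = 0 := fun i =>
        Set.indicator_of_notMem (by simp [hFydef]) _
      simp [this]
    have hγx0 : γ (Prod.fst ⁻¹' (↑Fx : Set (Ed d))ᶜ) = 0 := by
      rw [hmargx _ (Fx.finite_toSet.measurableSet.compl)]; exact hFx0
    have hγy0 : γ (Prod.snd ⁻¹' (↑Fy : Set (Ed d))ᶜ) = 0 := by
      rw [hmargy _ (Fy.finite_toSet.measurableSet.compl)]; exact hFy0
    have hprob : IsProbabilityMeasure γ := by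
      constructor
      have : (Set.univ : Set (Ed d × Ed d)) = Prod.fst ⁻¹' Set.univ := rfl
      rw [this, hmargx _ MeasurableSet.univ, hdiscc]
      simp only [Set.indicator_univ, Pi.one_apply, Finset.sum_const, Finset.card_univ,
        Fintype.card_fin, nsmul_eq_mul, mul_one]
      exact ENNReal.inv_mul_cancel hkne (ENNReal.natCast_ne_top k)
    have hTc : γ ((↑(Fx ×ˢ Fy) : Set (Ed d × Ed d))ᶜ) = 0 := by
      refine measure_mono_null (fun p hp => ?_)
        (measure_union_null hγx0 hγy0)
      simp only [Set.mem_compl_iff, Finset.coe_product, Set.mem_prod, not_and_or] at hp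
      rcases hp with hp | hp
      · exact Or.inl hp
      · exact Or.inr hp
    have hcostγ : cost γ = ∑ q ∈ Fx ×ˢ Fy, (γ {q}).toReal * f q := by
      have hres : γ.restrict (↑(Fx ×ˢ Fy) : Set (Ed d × Ed d)) = γ :=
        Measure.restrict_eq_self_of_ae_mem (by rw [MeasureTheory.ae_iff]; exact hTc)
      have hif := MeasureTheory.integral_finset (μ := γ) (Fx ×ˢ Fy) (f := f)
        MeasureTheory.IntegrableOn.finset
      rw [cost]
      have : (∫ q, ‖q.1 - q.2‖ ^ 2 ∂γ) = ∫ q, f q ∂γ := rfl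
      rw [this]
      conv_lhs => rw [← hres]
      rw [hif]
      simp [smul_eq_mul, measureReal_def]
    -- row and column sums of the coupling matrix
    have hrow : ∀ u : Ed d, ∑ v ∈ Fy, γ {(u, v)} = discUnif x {u} := by
      intro u
      have hdisj : (↑Fy : Set (Ed d)).PairwiseDisjoint
          (fun v => ({(u, v)} : Set (Ed d × Ed d))) := by
        intro a _ b _ hab
        simp only [Function.onFun, Set.disjoint_singleton, ne_eq, Prod.mk.injEq, not_and]
        exact fun _ => hab
      have h1 : γ (⋃ v ∈ Fy, ({(u, v)} : Set (Ed d × Ed d))) = ∑ v ∈ Fy, γ {(u, v)} :=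
        measure_biUnion_finset hdisj (fun b _ => measurableSet_singleton _)
      have hUm : MeasurableSet (⋃ v ∈ Fy, ({(u, v)} : Set (Ed d × Ed d))) :=
        (Set.Finite.biUnion Fy.finite_toSet (fun v _ => Set.finite_singleton _)).measurableSet
      have hsub : (⋃ v ∈ Fy, ({(u, v)} : Set (Ed d × Ed d))) ⊆ Prod.fst ⁻¹' {u} := by
        intro p hp
        simp only [Set.mem_iUnion, Set.mem_singleton_iff] at hp
        obtain ⟨v, _, rfl⟩ := hp
        rfl
      have hdiff : γ (Prod.fst ⁻¹' {u} \ ⋃ v ∈ Fy, ({(u, v)} : Set (Ed d × Ed d))) = 0 := by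
        refine measure_mono_null (fun p hp => ?_) hγy0
        simp only [Set.mem_diff, Set.mem_preimage, Set.mem_singleton_iff, Set.mem_iUnion,
          not_exists] at hp
        simp only [Set.mem_preimage, Set.mem_compl_iff, Finset.mem_coe]
        intro hmem
        exact hp.2 p.2 hmem (by rw [← hp.1])
      have h2 := measure_inter_add_diff (μ := γ) (Prod.fst ⁻¹' {u}) hUm
      rw [Set.inter_eq_self_of_subset_right hsub, hdiff, add_zero] at h2
      rw [← h1, h2, hmargx _ (measurableSet_singleton u)]
    have hcol : ∀ v : Ed d, ∑ u ∈ Fx, γ {(u, v)} = discUnif y {v} := by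
      intro v
      have hdisj : (↑Fx : Set (Ed d)).PairwiseDisjoint
          (fun u => ({(u, v)} : Set (Ed d × Ed d))) := by
        intro a _ b _ hab
        simp only [Function.onFun, Set.disjoint_singleton, ne_eq, Prod.mk.injEq, not_and]
        exact fun hab' => absurd hab' hab
      have h1 : γ (⋃ u ∈ Fx, ({(u, v)} : Set (Ed d × Ed d))) = ∑ u ∈ Fx, γ {(u, v)} :=
        measure_biUnion_finset hdisj (fun b _ => measurableSet_singleton _)
      have hUm : MeasurableSet (⋃ u ∈ Fx, ({(u, v)} : Set (Ed d × Ed d))) :=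
        (Set.Finite.biUnion Fx.finite_toSet (fun u _ => Set.finite_singleton _)).measurableSet
      have hsub : (⋃ u ∈ Fx, ({(u, v)} : Set (Ed d × Ed d))) ⊆ Prod.snd ⁻¹' {v} := by
        intro p hp
        simp only [Set.mem_iUnion, Set.mem_singleton_iff] at hp
        obtain ⟨u, _, rfl⟩ := hp
        rfl
      have hdiff : γ (Prod.snd ⁻¹' {v} \ ⋃ u ∈ Fx, ({(u, v)} : Set (Ed d × Ed d))) = 0 := by
        refine measure_mono_null (fun p hp => ?_) hγx0
        simp only [Set.mem_diff, Set.mem_preimage, Set.mem_singleton_iff, Set.mem_iUnion,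
          not_exists] at hp
        simp only [Set.mem_preimage, Set.mem_compl_iff, Finset.mem_coe]
        intro hmem
        exact hp.2 p.1 hmem (by rw [← hp.1])
      have h2 := measure_inter_add_diff (μ := γ) (Prod.snd ⁻¹' {v}) hUm
      rw [Set.inter_eq_self_of_subset_right hsub, hdiff, add_zero] at h2
      rw [← h1, h2, hmargy _ (measurableSet_singleton v)]
    -- real-valued coupling matrix
    set p : Ed d → Ed d → ℝ := fun u v => (γ {(u, v)}).toReal with hpdef
    have hp0 : ∀ u v, 0 ≤ p u v := fun u v => ENNReal.toReal_nonneg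
    have hrowR : ∀ u : Ed d, ∑ v ∈ Fy, p u v = (discUnif x {u}).toReal := by
      intro u
      rw [hpdef, ← ENNReal.toReal_sum (fun v _ => measure_ne_top γ _), hrow]
    have hcolR : ∀ v : Ed d, ∑ u ∈ Fx, p u v = (discUnif y {v}).toReal := by
      intro v
      rw [hpdef, ← ENNReal.toReal_sum (fun u _ => measure_ne_top γ _), hcol]
    -- mass of atoms
    have hmass : ∀ (z : Fin k → Ed d) (h' : Ed d → ℝ),
        ∑ u ∈ Finset.image z Finset.univ, (discUnif z {u}).toReal * h' u
          = (k:ℝ)⁻¹ * ∑ i, h' (z i) := by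
      intro z h'
      have hsing : ∀ u : Ed d, (discUnif z {u}).toReal
          = (k:ℝ)⁻¹ * ((Finset.univ.filter fun i => z i = u).card : ℝ) := by
        intro u
        rw [hdiscc]
        have hind : ∀ i : Fin k, ({u} : Set (Ed d)).indicator (1 : Ed d → ℝ≥0∞) (z i)
            = if z i = u then 1 else 0 := by
          intro i; simp [Set.indicator_apply]
        rw [Finset.sum_congr rfl fun i _ => hind i, Finset.sum_boole,
          ENNReal.toReal_mul, hkinv]
        simp
      rw [Finset.sum_congr rfl fun u _ => by rw [hsing u],
        Finset.sum_comp h' z, Finset.mul_sum]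
      exact Finset.sum_congr rfl fun u _ => by rw [nsmul_eq_mul]; ring
    have hmx := hmass x
    have hmy := hmass y
    rw [← hFxdef] at hmx
    rw [← hFydef] at hmy
    -- the potential from cyclic monotonicity
    obtain ⟨ψ, hψ⟩ := exists_potential
      (fun i j => (inner ℝ (x i) (y j) : ℝ) - inner ℝ (x i) (y i)) hk (cyc_nonpos x y h)
    set cF : Ed d → ℝ := fun u =>
      if hu : (Finset.univ.filter fun i => x i = u).Nonempty then
        (Finset.univ.filter fun i => x i = u).inf' hu
          (fun i => (inner ℝ (x i) (y i) : ℝ) - ψ i)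
      else 0 with hcFdef
    set gF : Ed d → ℝ := fun v =>
      if hv : (Finset.univ.filter fun j => y j = v).Nonempty then
        (Finset.univ.filter fun j => y j = v).inf' hv ψ
      else 0 with hgFdef
    have hcle : ∀ i : Fin k, cF (x i) ≤ (inner ℝ (x i) (y i) : ℝ) - ψ i := by
      intro i
      have hi : i ∈ Finset.univ.filter fun j => x j = x i := by simp
      simp only [hcFdef]
      rw [dif_pos ⟨i, hi⟩]
      exact Finset.inf'_le _ hi
    have hgle : ∀ j : Fin k, gF (y j) ≤ ψ j := by
      intro j
      have hj : j ∈ Finset.univ.filter fun i => y i = y j := by simp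
      simp only [hgFdef]
      rw [dif_pos ⟨j, hj⟩]
      exact Finset.inf'_le _ hj
    have hcg : ∀ u ∈ Fx, ∀ v ∈ Fy, (inner ℝ u v : ℝ) ≤ cF u + gF v := by
      intro u hu v hv
      obtain ⟨i0, _, hi0⟩ := Finset.mem_image.mp hu
      obtain ⟨j0, _, hj0⟩ := Finset.mem_image.mp hv
      have hnex : (Finset.univ.filter fun i => x i = u).Nonempty := ⟨i0, by simp [hi0]⟩
      have hney : (Finset.univ.filter fun j => y j = v).Nonempty := ⟨j0, by simp [hj0]⟩
      obtain ⟨i1, hi1mem, hieq⟩ := Finset.exists_mem_eq_inf' hnex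
        (fun i => (inner ℝ (x i) (y i) : ℝ) - ψ i)
      obtain ⟨j1, hj1mem, hjeq⟩ := Finset.exists_mem_eq_inf' hney ψ
      have hxi1 : x i1 = u := (Finset.mem_filter.mp hi1mem).2
      have hyj1 : y j1 = v := (Finset.mem_filter.mp hj1mem).2
      have hc1 : cF u = (inner ℝ (x i1) (y i1) : ℝ) - ψ i1 := by
        simp only [hcFdef]; rw [dif_pos hnex]; exact hieq
      have hg1 : gF v = ψ j1 := by
        simp only [hgFdef]; rw [dif_pos hney]; exact hjeq
      have hkey := hψ i1 j1
      rw [hc1, hg1, ← hxi1, ← hyj1]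
      linarith
    -- final comparison
    have hknn : (0:ℝ) ≤ (k:ℝ)⁻¹ := by positivity
    have key : (k:ℝ)⁻¹ * ∑ i, ‖x i - y i‖ ^ 2 ≤ cost γ := by
      rw [hcostγ, Finset.sum_product]
      have hbound : ∀ u ∈ Fx, ∀ v ∈ Fy,
          p u v * (‖u‖^2 + ‖v‖^2 - 2*cF u - 2*gF v) ≤ (γ {(u, v)}).toReal * f (u, v) := by
        intro u hu v hv
        have hexp : f (u, v) = ‖u‖^2 - 2*(inner ℝ u v : ℝ) + ‖v‖^2 := norm_sub_sq_real u v
        have h1 : ‖u‖^2 + ‖v‖^2 - 2*cF u - 2*gF v ≤ f (u, v) := by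
          have := hcg u hu v hv
          rw [hexp]
          linarith
        exact mul_le_mul_of_nonneg_left h1 (hp0 u v)
      refine le_trans ?_ (Finset.sum_le_sum fun u hu => Finset.sum_le_sum fun v hv =>
        hbound u hu v hv)
      have hsplit : ∑ u ∈ Fx, ∑ v ∈ Fy, p u v * (‖u‖^2 + ‖v‖^2 - 2*cF u - 2*gF v)
          = (∑ u ∈ Fx, (discUnif x {u}).toReal * (‖u‖^2 - 2*cF u))
            + (∑ v ∈ Fy, (discUnif y {v}).toReal * (‖v‖^2 - 2*gF v)) := by
        have hinner : ∀ u ∈ Fx, ∑ v ∈ Fy, p u v * (‖u‖^2 + ‖v‖^2 - 2*cF u - 2*gF v)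
            = (discUnif x {u}).toReal * (‖u‖^2 - 2*cF u)
              + ∑ v ∈ Fy, p u v * (‖v‖^2 - 2*gF v) := by
          intro u hu
          rw [← hrowR u, Finset.sum_mul, ← Finset.sum_add_distrib]
          exact Finset.sum_congr rfl fun v hv => by ring
        rw [Finset.sum_congr rfl hinner, Finset.sum_add_distrib]
        congr 1
        rw [Finset.sum_comm]
        refine Finset.sum_congr rfl fun v hv => ?_
        rw [← Finset.sum_mul, hcolR v]
      rw [hsplit, hmx, hmy]
      have hterm : ∀ i ∈ Finset.univ, ‖x i - y i‖^2
          ≤ (‖x i‖^2 - 2*cF (x i)) + (‖y i‖^2 - 2*gF (y i)) := by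
        intro i _
        have h1 := hcle i
        have h2 := hgle i
        have hexp : ‖x i - y i‖^2 = ‖x i‖^2 - 2*(inner ℝ (x i) (y i):ℝ) + ‖y i‖^2 :=
          norm_sub_sq_real _ _
        linarith
      have hsum := Finset.sum_le_sum hterm
      rw [Finset.sum_add_distrib] at hsum
      have := mul_le_mul_of_nonneg_left hsum hknn
      linarith [this, (mul_add ((k:ℝ)⁻¹) (∑ i, (‖x i‖^2 - 2*cF (x i)))
        (∑ i, (‖y i‖^2 - 2*gF (y i))))]
    rw [hmatch]
    exact key
end
end

section
/- Let x₁,…,x_k, y₁,…,y_k ∈ ℝ^d with the yᵢ distinct. If Γ = {(xᵢ,yᵢ)} is f-strongly cyclically monotone for some positive residual function f on [k], then Γ is f-strongly implementable: there exists φ: {y₁,…,y_k} → ℝ such that ⟨xᵢ, yᵢ − y_j⟩ ≥ φ(yᵢ) − φ(y_j) + f(i,j) for all i ≠ j. -/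
open MeasureTheory ProbabilityTheory Metric
open scoped ENNReal NNReal

noncomputable section

/-- strong cyclical monotonicity implies strong implementability. -/
theorem stmt3 {d k : ℕ} (x y : Fin k → Ed d) (hy : Function.Injective y)
    (f : Fin k → Fin k → ℝ) (hf : PosResidual f) (h : StrongCM x y f) :
    ∃ φ : Fin k → ℝ, ∀ i j, i ≠ j →
      (inner ℝ (x i) (y i - y j) : ℝ) ≥ φ i - φ j + f i j := by
  rcases Nat.eq_zero_or_pos k with hk | hk
  · subst hk; exact ⟨fun _ => 0, fun i => i.elim0⟩
  set i₀ : Fin k := ⟨0, hk⟩ with hi₀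
  set w : Fin k → Fin k → ℝ := fun i j => (inner ℝ (x i) (y i - y j) : ℝ) - f i j with hw
  set S : Fin k → Set ℝ := fun j => {s | ∃ m, ∃ σ : Fin (m+1) → Fin k,
    σ 0 = i₀ ∧ σ (Fin.last m) = j ∧ (∀ t : Fin m, σ t.castSucc ≠ σ t.succ) ∧
    s = ∑ t : Fin m, w (σ t.castSucc) (σ t.succ)} with hS
  -- cycles have nonnegative w-weight
  have hcycle : ∀ (n : ℕ) (c : Fin (n+1) → Fin k), (∀ i, c i ≠ c (i + 1)) →
      0 ≤ ∑ i, w (c i) (c (i + 1)) := by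
    intro n c hc
    have h1 := h n c hc
    have h2 : (0:ℝ) ≤ ∑ i, f (c i) (c (i + 1)) :=
      Finset.sum_nonneg fun i _ => le_of_lt (hf.2.1 _ _ (hc i))
    have h3 : ∑ i, w (c i) (c (i + 1)) =
        ∑ i, (inner ℝ (x (c i)) (y (c i) - y (c (i + 1))) : ℝ) - ∑ i, f (c i) (c (i + 1)) := by
      rw [← Finset.sum_sub_distrib]
    rw [h3]; linarith
  -- extension of a chain by one edge
  have hext : ∀ i j : Fin k, i ≠ j → ∀ s ∈ S i, s + w i j ∈ S j := by
    intro i j hij s hs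
    obtain ⟨m, σ, h0, hl, hd, hsum⟩ := hs
    refine ⟨m + 1, Fin.snoc σ j, ?_, ?_, ?_, ?_⟩
    · rw [show (0 : Fin (m+2)) = Fin.castSucc 0 from rfl, Fin.snoc_castSucc]; exact h0
    · simp [Fin.snoc_last]
    · intro t
      refine Fin.lastCases ?_ (fun u => ?_) t
      · rw [Fin.succ_last, Fin.snoc_castSucc, Fin.snoc_last, hl]
        exact hij
      · rw [Fin.succ_castSucc, Fin.snoc_castSucc, Fin.snoc_castSucc]
        exact hd u
    · rw [Fin.sum_univ_castSucc]
      simp only [Fin.succ_castSucc, Fin.snoc_castSucc, Fin.succ_last, Fin.snoc_last, hl, hsum]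
  -- chains ending at the base point have nonnegative weight
  have hS0 : ∀ s ∈ S i₀, 0 ≤ s := by
    intro s hs
    obtain ⟨m, σ, h0, hl, hd, hsum⟩ := hs
    rcases m with _ | n
    · simp [hsum]
    · set c : Fin (n+1) → Fin k := fun i => σ i.castSucc with hc
      have hcs : ∀ i : Fin (n+1), c (i + 1) = σ i.succ := by
        intro i
        refine Fin.lastCases ?_ (fun u => ?_) i
        · rw [Fin.last_add_one, hc]
          simp only [Fin.castSucc_zero, h0]
          rw [Fin.succ_last, hl]
        · rw [Fin.coeSucc_eq_succ, hc]
          show σ u.succ.castSucc = σ u.castSucc.succ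
          rw [Fin.succ_castSucc]
      have hdist : ∀ i : Fin (n+1), c i ≠ c (i + 1) := by
        intro i; rw [hcs i]; exact hd i
      have := hcycle n c hdist
      have heq : ∑ i, w (c i) (c (i + 1)) = ∑ t : Fin (n+1), w (σ t.castSucc) (σ t.succ) := by
        apply Finset.sum_congr rfl
        intro i _; rw [hcs i]
      rw [heq] at this
      rw [hsum]; exact this
  have hmem0 : (0:ℝ) ∈ S i₀ := ⟨0, fun _ => i₀, rfl, rfl, fun t => t.elim0, by simp⟩
  have hne : ∀ j, (S j).Nonempty := by
    intro j
    by_cases hj : j = i₀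
    · subst hj; exact ⟨0, hmem0⟩
    · exact ⟨0 + w i₀ j, hext i₀ j (Ne.symm hj) 0 hmem0⟩
  have hbdd : ∀ j, BddBelow (S j) := by
    intro j
    by_cases hj : j = i₀
    · subst hj; exact ⟨0, hS0⟩
    · refine ⟨-(w j i₀), fun s hs => ?_⟩
      have := hS0 _ (hext j i₀ hj s hs)
      linarith
  set v : Fin k → ℝ := fun j => sInf (S j) with hv
  have hkey : ∀ i j : Fin k, i ≠ j → v j ≤ v i + w i j := by
    intro i j hij
    have h1 : ∀ s ∈ S i, v j ≤ s + w i j := fun s hs => csInf_le (hbdd j) (hext i j hij s hs)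
    have h2 : v j - w i j ≤ v i := le_csInf (hne i) (fun s hs => by linarith [h1 s hs])
    linarith
  refine ⟨fun i => -(v i), fun i j hij => ?_⟩
  have h1 := hkey i j hij
  have h2 : w i j = (inner ℝ (x i) (y i - y j) : ℝ) - f i j := rfl
  rw [h2] at h1
  simp only [ge_iff_le]
  linarith
end
end

section
/- Let x₁,…,x_k, y₁,…,y_k ∈ ℝ^d. If Γ = {(xᵢ,yᵢ)} is f-strongly implementable for some positive residual function f, then the coupling π = (1/k)∑ᵢ δ(xᵢ,yᵢ) is the unique optimal transport plan for the quadratic cost between μ = (1/k)∑ᵢ δ(xᵢ) and ν = (1/k)∑ᵢ δ(yᵢ). -/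
open MeasureTheory ProbabilityTheory Metric
open scoped ENNReal NNReal

noncomputable section

/-- Auxiliary: first marginal of the matching plan. -/
lemma matchPlan_map_fst {d k : ℕ} (x y : Fin k → Ed d) :
    (matchPlan x y).map Prod.fst = discUnif x := by
  rw [matchPlan, discUnif, Measure.map_smul]
  congr 1
  ext s hs
  rw [Measure.map_apply measurable_fst hs, Measure.finset_sum_apply, Measure.finset_sum_apply]
  congr 1; ext i; by_cases h : x i ∈ s <;> simp [Set.indicator_apply, h]

/-- Auxiliary: second marginal of the matching plan. -/
lemma matchPlan_map_snd {d k : ℕ} (x y : Fin k → Ed d) :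
    (matchPlan x y).map Prod.snd = discUnif y := by
  rw [matchPlan, discUnif, Measure.map_smul]
  congr 1
  ext s hs
  rw [Measure.map_apply measurable_snd hs, Measure.finset_sum_apply, Measure.finset_sum_apply]
  congr 1; ext i; by_cases h : y i ∈ s <;> simp [Set.indicator_apply, h]

lemma integrable_sqcost_dirac {d : ℕ} (p : Ed d × Ed d) :
    Integrable (fun q : Ed d × Ed d => ‖q.1 - q.2‖ ^ 2) (Measure.dirac p) := by
  constructor
  · exact (((continuous_fst.sub continuous_snd).norm).pow 2).aestronglyMeasurable
  · simp only [HasFiniteIntegral, lintegral_dirac]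
    exact ENNReal.coe_lt_top

/-- strong implementability implies that the matching is the unique
optimal plan for the quadratic cost. -/
theorem stmt4 {d k : ℕ} (x y : Fin k → Ed d)
    (f : Fin k → Fin k → ℝ) (hf : PosResidual f)
    (φ : Fin k → ℝ)
    (himp : ∀ i j, (inner ℝ (x i) (y i - y j) : ℝ) ≥ φ i - φ j + f i j) :
    matchPlan x y ∈ Couplings (discUnif x) (discUnif y) ∧
      ∀ γ ∈ Couplings (discUnif x) (discUnif y),
        cost (matchPlan x y) ≤ cost γ ∧ (cost γ = cost (matchPlan x y) → γ = matchPlan x y) := by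
  classical
  refine ⟨⟨matchPlan_map_fst x y, matchPlan_map_snd x y⟩, ?_⟩
  rintro γ ⟨hγ1, hγ2⟩
  -- injectivity of x and y
  have hx : Function.Injective x := by
    intro i j hij
    by_contra hne
    have h1 := himp i j
    have h2 := himp j i
    have hsum : (inner ℝ (x i) (y i - y j) : ℝ) + (inner ℝ (x j) (y j - y i) : ℝ) = 0 := by
      rw [hij, ← inner_add_right]
      simp
    have hfs := hf.2.2 i j
    have hfp := hf.2.1 i j hne
    linarith
  have hy : Function.Injective y := by
    intro i j hij
    by_contra hne
    have h1 := himp i j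
    have h2 := himp j i
    have e1 : (inner ℝ (x i) (y i - y j) : ℝ) = 0 := by rw [hij]; simp
    have e2 : (inner ℝ (x j) (y j - y i) : ℝ) = 0 := by rw [hij]; simp
    have hfs := hf.2.2 i j
    have hfp := hf.2.1 i j hne
    linarith
  rcases Nat.eq_zero_or_pos k with hk | hk
  · subst hk
    have hγ0 : γ = 0 := by
      have h1 : γ Set.univ = 0 := by
        have h := congrArg (fun m : Measure (Ed d) => m Set.univ) hγ1
        simpa [Measure.map_apply measurable_fst MeasurableSet.univ, discUnif] using h
      exact Measure.measure_univ_eq_zero.mp h1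
    have hm0 : matchPlan x y = 0 := by simp [matchPlan]
    rw [hγ0, hm0]
    exact ⟨le_rfl, fun _ => rfl⟩
  have hk0 : (k : ℝ≥0∞) ≠ 0 := by exact_mod_cast hk.ne'
  have hkR : (0:ℝ) < (k:ℝ) := by exact_mod_cast hk
  set e : Fin k × Fin k → Ed d × Ed d := fun q => (x q.1, y q.2) with he_def
  have he : Function.Injective e := by
    intro a b hab
    exact Prod.ext (hx (congrArg Prod.fst hab)) (hy (congrArg Prod.snd hab))
  -- γ is concentrated on the range of e
  have hnull : γ (Set.range e)ᶜ = 0 := by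
    have hrx : MeasurableSet (Set.range x) := (Set.finite_range x).measurableSet
    have hry : MeasurableSet (Set.range y) := (Set.finite_range y).measurableSet
    have h1 : γ (Prod.fst ⁻¹' (Set.range x)ᶜ) = 0 := by
      rw [← Measure.map_apply measurable_fst hrx.compl, hγ1, discUnif,
        Measure.smul_apply, Measure.finset_sum_apply]
      simp [Measure.dirac_apply' _ hrx.compl, Set.indicator_apply]
    have h2 : γ (Prod.snd ⁻¹' (Set.range y)ᶜ) = 0 := by
      rw [← Measure.map_apply measurable_snd hry.compl, hγ2, discUnif,
        Measure.smul_apply, Measure.finset_sum_apply]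
      simp [Measure.dirac_apply' _ hry.compl, Set.indicator_apply]
    refine measure_mono_null ?_ (measure_union_null h1 h2)
    intro p hp
    by_contra hc
    simp only [Set.mem_union, Set.mem_preimage, Set.mem_compl_iff, Set.mem_range, not_or,
      not_not] at hc
    obtain ⟨⟨i, hi⟩, ⟨j, hj⟩⟩ := hc
    exact hp ⟨(i, j), Prod.ext hi hj⟩
  have hre : MeasurableSet (Set.range e) := (Set.finite_range e).measurableSet
  -- decomposition of γ as a finite combination of Dirac masses
  have hγdec : γ = ∑ q : Fin k × Fin k, γ {e q} • Measure.dirac (e q) := by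
    ext s hs
    rw [Measure.finset_sum_apply]
    simp_rw [Measure.smul_apply, Measure.dirac_apply' _ hs, smul_eq_mul]
    have h1 : γ s = γ (s ∩ Set.range e) := by
      have h0 : γ (s \ Set.range e) = 0 :=
        measure_mono_null (fun p hp => hp.2) hnull
      rw [← measure_inter_add_diff s hre, h0, add_zero]
    have h2 : s ∩ Set.range e =
        ⋃ q ∈ (Finset.univ.filter (fun q : Fin k × Fin k => e q ∈ s)), {e q} := by
      ext p
      simp only [Set.mem_inter_iff, Set.mem_range, Set.mem_iUnion, Finset.mem_filter,
        Finset.mem_univ, true_and, Set.mem_singleton_iff]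
      constructor
      · rintro ⟨hps, q, rfl⟩; exact ⟨q, hps, rfl⟩
      · rintro ⟨q, hqs, rfl⟩; exact ⟨hqs, q, rfl⟩
    rw [h1, h2, measure_biUnion_finset ?_ (fun q _ => measurableSet_singleton _)]
    · rw [Finset.sum_filter]
      apply Finset.sum_congr rfl
      intro q _
      by_cases hq : e q ∈ s <;> simp [Set.indicator_apply, hq]
    · intro p _ q _ hpq
      exact Set.disjoint_singleton.mpr (fun hc => hpq (he hc))
  -- the weights
  set a : Fin k × Fin k → ℝ := fun q => (γ {e q}).toReal with ha_def
  -- marginal identities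
  have hrow : ∀ i, ∑ j, γ {e (i, j)} = (k : ℝ≥0∞)⁻¹ := by
    intro i
    have hms : MeasurableSet (Prod.fst ⁻¹' {x i} : Set (Ed d × Ed d)) :=
      measurable_fst (measurableSet_singleton _)
    have h1 : γ (Prod.fst ⁻¹' {x i}) = (k : ℝ≥0∞)⁻¹ := by
      rw [← Measure.map_apply measurable_fst (measurableSet_singleton _), hγ1, discUnif,
        Measure.smul_apply, Measure.finset_sum_apply]
      have hd : ∀ j, Measure.dirac (x j) ({x i} : Set (Ed d)) = if j = i then 1 else 0 := by
        intro j
        rw [Measure.dirac_apply' _ (measurableSet_singleton _)]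
        by_cases h : j = i
        · simp [h]
        · rw [Set.indicator_of_notMem
              (by simp only [Set.mem_singleton_iff]; exact fun hxx => h (hx hxx)), if_neg h]
      rw [Finset.sum_congr rfl (fun j _ => hd j), Finset.sum_ite_eq' Finset.univ i (fun _ => 1)]
      simp
    have h2 : (∑ q : Fin k × Fin k, γ {e q} • Measure.dirac (e q)) (Prod.fst ⁻¹' {x i})
        = ∑ j, γ {e (i, j)} := by
      rw [Measure.finset_sum_apply]
      simp_rw [Measure.smul_apply, Measure.dirac_apply' _ hms, smul_eq_mul]
      rw [Fintype.sum_prod_type]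
      rw [Finset.sum_eq_single i ?_ (fun h => absurd (Finset.mem_univ i) h)]
      · apply Finset.sum_congr rfl
        intro j _
        rw [Set.indicator_of_mem (by simp [he_def]) (1 : Ed d × Ed d → ℝ≥0∞), Pi.one_apply,
          mul_one]
      · intro b _ hbi
        apply Finset.sum_eq_zero
        intro j _
        rw [Set.indicator_of_notMem (by simp [he_def]; exact fun hxx => hbi (hx hxx)), mul_zero]
    calc ∑ j, γ {e (i, j)} = γ (Prod.fst ⁻¹' {x i}) := by rw [← h2, ← hγdec]
      _ = (k : ℝ≥0∞)⁻¹ := h1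
  have hcol : ∀ j, ∑ i, γ {e (i, j)} = (k : ℝ≥0∞)⁻¹ := by
    intro j
    have hms : MeasurableSet (Prod.snd ⁻¹' {y j} : Set (Ed d × Ed d)) :=
      measurable_snd (measurableSet_singleton _)
    have h1 : γ (Prod.snd ⁻¹' {y j}) = (k : ℝ≥0∞)⁻¹ := by
      rw [← Measure.map_apply measurable_snd (measurableSet_singleton _), hγ2, discUnif,
        Measure.smul_apply, Measure.finset_sum_apply]
      have hd : ∀ i, Measure.dirac (y i) ({y j} : Set (Ed d)) = if i = j then 1 else 0 := by
        intro i
        rw [Measure.dirac_apply' _ (measurableSet_singleton _)]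
        by_cases h : i = j
        · simp [h]
        · rw [Set.indicator_of_notMem
              (by simp only [Set.mem_singleton_iff]; exact fun hyy => h (hy hyy)), if_neg h]
      rw [Finset.sum_congr rfl (fun i _ => hd i), Finset.sum_ite_eq' Finset.univ j (fun _ => 1)]
      simp
    have h2 : (∑ q : Fin k × Fin k, γ {e q} • Measure.dirac (e q)) (Prod.snd ⁻¹' {y j})
        = ∑ i, γ {e (i, j)} := by
      rw [Measure.finset_sum_apply]
      simp_rw [Measure.smul_apply, Measure.dirac_apply' _ hms, smul_eq_mul]
      rw [Fintype.sum_prod_type_right]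
      rw [Finset.sum_eq_single j ?_ (fun h => absurd (Finset.mem_univ j) h)]
      · apply Finset.sum_congr rfl
        intro i _
        rw [Set.indicator_of_mem (by simp [he_def]) (1 : Ed d × Ed d → ℝ≥0∞), Pi.one_apply,
          mul_one]
      · intro b _ hbj
        apply Finset.sum_eq_zero
        intro i _
        rw [Set.indicator_of_notMem (by simp [he_def]; exact fun hyy => hbj (hy hyy)), mul_zero]
    calc ∑ i, γ {e (i, j)} = γ (Prod.snd ⁻¹' {y j}) := by rw [← h2, ← hγdec]
      _ = (k : ℝ≥0∞)⁻¹ := h1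
  -- finiteness of weights
  have hfin : ∀ q : Fin k × Fin k, γ {e q} ≠ ∞ := by
    intro q
    have hle : γ {e (q.1, q.2)} ≤ ∑ j, γ {e (q.1, j)} :=
      Finset.single_le_sum (f := fun j => γ {e (q.1, j)}) (fun _ _ => zero_le)
        (Finset.mem_univ q.2)
    rw [hrow q.1] at hle
    exact ne_top_of_le_ne_top (ENNReal.inv_ne_top.mpr hk0) hle
  -- costs as finite sums
  have hint : ∀ q : Fin k × Fin k, Integrable (fun p : Ed d × Ed d => ‖p.1 - p.2‖ ^ 2)
      (γ {e q} • Measure.dirac (e q)) :=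
    fun q => (integrable_sqcost_dirac (e q)).smul_measure (hfin q)
  have hcostγ : cost γ = ∑ q : Fin k × Fin k, a q * ‖x q.1 - y q.2‖ ^ 2 := by
    rw [cost]
    conv_lhs => rw [hγdec]
    rw [integral_finset_sum_measure (fun q _ => hint q)]
    apply Finset.sum_congr rfl
    intro q _
    rw [integral_smul_measure, integral_dirac, smul_eq_mul]
  have hcostm : cost (matchPlan x y) = ∑ i, (k:ℝ)⁻¹ * ‖x i - y i‖ ^ 2 := by
    rw [cost, matchPlan, integral_smul_measure,
      integral_finset_sum_measure (fun i _ => integrable_sqcost_dirac (x i, y i))]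
    simp_rw [integral_dirac]
    rw [smul_eq_mul, Finset.mul_sum]
    apply Finset.sum_congr rfl
    intro i _
    rw [ENNReal.toReal_inv]
    norm_num
  -- real marginal identities
  have rowR : ∀ i, ∑ j, a (i, j) = (k:ℝ)⁻¹ := by
    intro i
    have h := congrArg ENNReal.toReal (hrow i)
    rw [ENNReal.toReal_sum (fun j _ => hfin (i, j)), ENNReal.toReal_inv] at h
    simpa using h
  have colR : ∀ j, ∑ i, a (i, j) = (k:ℝ)⁻¹ := by
    intro j
    have h := congrArg ENNReal.toReal (hcol j)
    rw [ENNReal.toReal_sum (fun i _ => hfin (i, j)), ENNReal.toReal_inv] at h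
    simpa using h
  -- the pointwise strong monotonicity estimate
  set ψ : Fin k → ℝ := fun i => ‖y i‖ ^ 2 - 2 * φ i with hψ_def
  have hpt : ∀ i j : Fin k,
      ‖x i - y i‖ ^ 2 + (ψ j - ψ i) + 2 * f i j ≤ ‖x i - y j‖ ^ 2 := by
    intro i j
    have h1 := himp i j
    have e1 : (inner ℝ (x i) (y i - y j) : ℝ) = inner ℝ (x i) (y i) - inner ℝ (x i) (y j) :=
      inner_sub_right _ _ _
    have e2 : ‖x i - y j‖ ^ 2 = ‖x i‖ ^ 2 - 2 * (inner ℝ (x i) (y j) : ℝ) + ‖y j‖ ^ 2 :=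
      norm_sub_sq_real _ _
    have e3 : ‖x i - y i‖ ^ 2 = ‖x i‖ ^ 2 - 2 * (inner ℝ (x i) (y i) : ℝ) + ‖y i‖ ^ 2 :=
      norm_sub_sq_real _ _
    simp only [hψ_def]
    linarith
  -- the cost splitting identity
  have hsplit : ∑ q : Fin k × Fin k, a q * (‖x q.1 - y q.1‖ ^ 2 + (ψ q.2 - ψ q.1) + 2 * f q.1 q.2)
      = (∑ i, (k:ℝ)⁻¹ * ‖x i - y i‖ ^ 2) + 2 * ∑ q : Fin k × Fin k, a q * f q.1 q.2 := by
    have h1 : ∑ q : Fin k × Fin k, a q * ‖x q.1 - y q.1‖ ^ 2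
        = ∑ i, (k:ℝ)⁻¹ * ‖x i - y i‖ ^ 2 := by
      rw [Fintype.sum_prod_type]
      refine Finset.sum_congr rfl fun i _ => ?_
      have hs : (∑ j, a (i, j)) * ‖x i - y i‖ ^ 2 = ∑ j, a (i, j) * ‖x i - y i‖ ^ 2 :=
        Finset.sum_mul _ _ _
      rw [rowR i] at hs
      exact hs.symm
    have h2 : ∑ q : Fin k × Fin k, a q * ψ q.2 = ∑ j, (k:ℝ)⁻¹ * ψ j := by
      rw [Fintype.sum_prod_type_right]
      refine Finset.sum_congr rfl fun j _ => ?_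
      have hs : (∑ i, a (i, j)) * ψ j = ∑ i, a (i, j) * ψ j := Finset.sum_mul _ _ _
      rw [colR j] at hs
      exact hs.symm
    have h3 : ∑ q : Fin k × Fin k, a q * ψ q.1 = ∑ i, (k:ℝ)⁻¹ * ψ i := by
      rw [Fintype.sum_prod_type]
      refine Finset.sum_congr rfl fun i _ => ?_
      have hs : (∑ j, a (i, j)) * ψ i = ∑ j, a (i, j) * ψ i := Finset.sum_mul _ _ _
      rw [rowR i] at hs
      exact hs.symm
    have hexp : ∀ q : Fin k × Fin k,
        a q * (‖x q.1 - y q.1‖ ^ 2 + (ψ q.2 - ψ q.1) + 2 * f q.1 q.2)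
        = a q * ‖x q.1 - y q.1‖ ^ 2 + a q * ψ q.2 - a q * ψ q.1 + 2 * (a q * f q.1 q.2) :=
      fun q => by ring
    rw [Finset.sum_congr rfl (fun q _ => hexp q), Finset.sum_add_distrib,
      Finset.sum_sub_distrib, Finset.sum_add_distrib, ← Finset.mul_sum, h1, h2, h3]
    ring
  have hann : ∀ q : Fin k × Fin k, 0 ≤ a q := fun q => ENNReal.toReal_nonneg
  have hmain : cost (matchPlan x y) + 2 * ∑ q : Fin k × Fin k, a q * f q.1 q.2 ≤ cost γ := by
    rw [hcostγ, hcostm, ← hsplit]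
    exact Finset.sum_le_sum (fun q _ => mul_le_mul_of_nonneg_left (hpt q.1 q.2) (hann q))
  have hfnn : ∀ q : Fin k × Fin k, 0 ≤ a q * f q.1 q.2 := by
    intro q
    rcases eq_or_ne q.1 q.2 with h | h
    · rw [h, hf.1]; simp
    · exact mul_nonneg (hann q) (le_of_lt (hf.2.1 _ _ h))
  have hsumnn : 0 ≤ ∑ q : Fin k × Fin k, a q * f q.1 q.2 :=
    Finset.sum_nonneg (fun q _ => hfnn q)
  refine ⟨by linarith, ?_⟩
  intro heq
  have hzero : ∑ q : Fin k × Fin k, a q * f q.1 q.2 = 0 := by linarith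
  have hqz : ∀ q : Fin k × Fin k, q.1 ≠ q.2 → γ {e q} = 0 := by
    intro q hne
    have h1 : a q * f q.1 q.2 = 0 :=
      (Finset.sum_eq_zero_iff_of_nonneg (fun q _ => hfnn q)).mp hzero q (Finset.mem_univ q)
    have h2 : a q = 0 := by
      rcases mul_eq_zero.mp h1 with h | h
      · exact h
      · exact absurd h (ne_of_gt (hf.2.1 _ _ hne))
    rw [ha_def] at h2
    exact ((ENNReal.toReal_eq_zero_iff _).mp h2).resolve_right (hfin q)
  have hdiag : ∀ i, γ {e (i, i)} = (k : ℝ≥0∞)⁻¹ := by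
    intro i
    have h := hrow i
    rw [Finset.sum_eq_single i (fun j _ hji => hqz (i, j) (Ne.symm hji))
      (fun h => absurd (Finset.mem_univ i) h)] at h
    exact h
  rw [hγdec, matchPlan, Finset.smul_sum, Fintype.sum_prod_type]
  apply Finset.sum_congr rfl
  intro i _
  rw [Finset.sum_eq_single i (fun j _ hji => by rw [hqz (i, j) (Ne.symm hji), zero_smul])
    (fun h => absurd (Finset.mem_univ i) h), hdiag i]
end
end

section
/- Let x₁,…,x_k, y₁,…,y_k ∈ ℝ^d and suppose Γ = {(xᵢ,yᵢ)} is f-strongly implementable for a positive residual function f. Then Γ is ε-robust for every ε ≤ (1/2) · min_{i≠j} f(i,j)/(‖xᵢ−x_j‖ + ‖yᵢ−y_j‖). -/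
open MeasureTheory ProbabilityTheory Metric
open scoped ENNReal NNReal

noncomputable section

open scoped RealInnerProductSpace

lemma shift_sum {n : ℕ} {M : Type*} [AddCommMonoid M] (g : Fin (n+1) → M) :
    ∑ i, g (i + 1) = ∑ i, g i :=
  Fintype.sum_equiv (Equiv.addRight 1) _ _ (fun _ => rfl)

/-- strong implementability implies `ε`-robustness for
`ε ≤ (1/2) min_{i≠j} f(i,j)/(‖xᵢ-x_j‖ + ‖yᵢ-y_j‖)`. -/
theorem stmt6 {d k : ℕ} (x y : Fin k → Ed d)
    (f : Fin k → Fin k → ℝ) (hf : PosResidual f)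
    (φ : Fin k → ℝ)
    (himp : ∀ i j, (inner ℝ (x i) (y i - y j) : ℝ) ≥ φ i - φ j + f i j)
    (ε : ℝ)
    (hε : ∀ i j, i ≠ j → ε ≤ 1 / 2 * (f i j / (‖x i - x j‖ + ‖y i - y j‖))) :
    Robust x y ε := by
  intro n c _hc α hα
  have hε0 : 0 ≤ ε := le_trans (norm_nonneg (α 0)) (hα 0)
  -- key pairwise bound
  have key : ∀ i j, i ≠ j → ε * (‖x i - x j‖ + ‖y i - y j‖) ≤ 1 / 2 * f i j := by
    intro i j hij
    set D := ‖x i - x j‖ + ‖y i - y j‖ with hD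
    have hD0 : 0 ≤ D := by positivity
    rcases eq_or_lt_of_le hD0 with h0 | h0
    · rw [← h0, mul_zero]
      have := (hf.2.1 i j hij).le
      linarith
    · have h1 := hε i j hij
      have h2 : ε * D ≤ (1 / 2 * (f i j / D)) * D :=
        mul_le_mul_of_nonneg_right h1 hD0
      calc ε * D ≤ 1 / 2 * (f i j / D) * D := h2
        _ = 1 / 2 * f i j := by field_simp
  -- abbreviations
  set A : Fin (n+1) → Ed d := fun i => x (c i) with hA
  set B : Fin (n+1) → Ed d := fun i => y (c i) with hB
  -- named sums
  set F : ℝ := ∑ i, f (c i) (c (i+1)) with hF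
  have hF0 : 0 ≤ F := by
    apply Finset.sum_nonneg
    intro i _
    by_cases h : c i = c (i+1)
    · rw [h, hf.1]
    · exact (hf.2.1 _ _ h).le
  set nA : ℝ := ∑ i, ‖A i‖^2 with hnA
  set nB : ℝ := ∑ i, ‖B i‖^2 with hnB
  set nα : ℝ := ∑ i, ‖α i‖^2 with hnα
  set sAB : ℝ := ∑ i, ⟪A i, B i⟫ with hsAB
  set sAB' : ℝ := ∑ i, ⟪A i, B (i+1)⟫ with hsAB'
  set sAα : ℝ := ∑ i, ⟪A i, α i⟫ with hsAα
  set sA'α : ℝ := ∑ i, ⟪A (i-1), α i⟫ with hsA'α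
  set sBα : ℝ := ∑ i, ⟪B i, α i⟫ with hsBα
  set sB'α : ℝ := ∑ i, ⟪B (i+1), α i⟫ with hsB'α
  set sαα' : ℝ := ∑ i, ⟪α i, α (i+1)⟫ with hsαα'
  -- reindexing identities
  have rB : ∑ i, ‖B (i+1)‖^2 = nB := shift_sum (fun i => ‖B i‖^2)
  have rα : ∑ i, ‖α (i+1)‖^2 = nα := shift_sum (fun i => ‖α i‖^2)
  have rBα : ∑ i, ⟪B (i+1), α (i+1)⟫ = sBα := shift_sum (fun i => ⟪B i, α i⟫)
  have rAα : ∑ i, ⟪A i, α (i+1)⟫ = sA'α := by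
    rw [hsA'α, ← shift_sum (fun i => ⟪A (i-1), α i⟫)]
    simp [add_sub_cancel_right]
  -- expansion of the right-hand side
  have eR : ∑ i, ‖(A i + α i) - (B (i+1) + α (i+1))‖^2
      = nA + nB + 2*nα - 2*sAB' + 2*sAα - 2*sA'α - 2*sB'α + 2*sBα - 2*sαα' := by
    have ptw : ∀ i : Fin (n+1), ‖(A i + α i) - (B (i+1) + α (i+1))‖^2 =
        ‖A i‖^2 + ‖B (i+1)‖^2 + ‖α i‖^2 + ‖α (i+1)‖^2
        - 2*⟪A i, B (i+1)⟫ + 2*⟪A i, α i⟫ - 2*⟪A i, α (i+1)⟫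
        - 2*⟪B (i+1), α i⟫ + 2*⟪B (i+1), α (i+1)⟫ - 2*⟪α i, α (i+1)⟫ := by
      intro i
      rw [← real_inner_self_eq_norm_sq, ← real_inner_self_eq_norm_sq,
          ← real_inner_self_eq_norm_sq, ← real_inner_self_eq_norm_sq,
          ← real_inner_self_eq_norm_sq]
      simp only [inner_sub_left, inner_sub_right, inner_add_left, inner_add_right]
      rw [real_inner_comm (B (i+1)) (A i), real_inner_comm (α i) (A i),
          real_inner_comm (α (i+1)) (A i), real_inner_comm (α i) (B (i+1)),
          real_inner_comm (α (i+1)) (B (i+1)), real_inner_comm (α (i+1)) (α i)]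
      ring
    rw [Finset.sum_congr rfl (fun i _ => ptw i)]
    simp only [Finset.sum_add_distrib, Finset.sum_sub_distrib, ← Finset.mul_sum]
    rw [rB, rα, rBα, rAα]
    ring
  -- expansion of the left-hand side
  have eL : ∑ i, ‖A i - B i‖^2 = nA - 2*sAB + nB := by
    have ptw : ∀ i : Fin (n+1), ‖A i - B i‖^2 = ‖A i‖^2 - 2*⟪A i, B i⟫ + ‖B i‖^2 := by
      intro i
      rw [← real_inner_self_eq_norm_sq, ← real_inner_self_eq_norm_sq,
          ← real_inner_self_eq_norm_sq]
      simp only [inner_sub_left, inner_sub_right]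
      rw [real_inner_comm (B i) (A i)]
      ring
    rw [Finset.sum_congr rfl (fun i _ => ptw i)]
    simp only [Finset.sum_add_distrib, Finset.sum_sub_distrib, ← Finset.mul_sum]
    rfl
  -- monotonicity inequality from himp
  have h1 : F ≤ sAB - sAB' := by
    have step : ∀ i : Fin (n+1), φ (c i) - φ (c (i+1)) + f (c i) (c (i+1))
        ≤ ⟪A i, B i⟫ - ⟪A i, B (i+1)⟫ := by
      intro i
      have := himp (c i) (c (i+1))
      simpa [hA, hB, inner_sub_right] using this
    have := Finset.sum_le_sum (fun i (_ : i ∈ Finset.univ) => step i)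
    rw [Finset.sum_add_distrib, Finset.sum_sub_distrib, Finset.sum_sub_distrib,
        shift_sum (fun i => φ (c i))] at this
    simpa [hsAB, hsAB', hF] using this
  -- cross-term bound
  have h2 : -(sAα - sA'α + sBα - sB'α) ≤ 1/2 * F := by
    have expand : sAα - sA'α + sBα - sB'α
        = ∑ i, ⟪(A i - A (i-1)) + (B i - B (i+1)), α i⟫ := by
      simp only [inner_add_left, inner_sub_left, Finset.sum_add_distrib,
        Finset.sum_sub_distrib]
      ring
    rw [expand, ← Finset.sum_neg_distrib]
    have bnd : ∀ i : Fin (n+1), -⟪(A i - A (i-1)) + (B i - B (i+1)), α i⟫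
        ≤ (‖A i - A (i-1)‖ + ‖B i - B (i+1)‖) * ε := by
      intro i
      have h3 := abs_real_inner_le_norm ((A i - A (i-1)) + (B i - B (i+1))) (α i)
      have h4 : ‖(A i - A (i-1)) + (B i - B (i+1))‖ ≤ ‖A i - A (i-1)‖ + ‖B i - B (i+1)‖ :=
        norm_add_le _ _
      have h5 : ‖(A i - A (i-1)) + (B i - B (i+1))‖ * ‖α i‖
          ≤ (‖A i - A (i-1)‖ + ‖B i - B (i+1)‖) * ε :=
        mul_le_mul h4 (hα i) (norm_nonneg _) (by positivity)
      have := neg_abs_le (⟪(A i - A (i-1)) + (B i - B (i+1)), α i⟫)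
      linarith [neg_le_neg h3]
    have total := Finset.sum_le_sum (fun i (_ : i ∈ Finset.univ) => bnd i)
    refine le_trans total ?_
    have reA : ∑ i, ‖A i - A (i-1)‖ = ∑ i, ‖A i - A (i+1)‖ := by
      rw [← shift_sum (fun i => ‖A i - A (i-1)‖)]
      apply Finset.sum_congr rfl
      intro i _
      rw [add_sub_cancel_right, norm_sub_rev]
    have perterm : ∀ i : Fin (n+1),
        (‖A i - A (i+1)‖ + ‖B i - B (i+1)‖) * ε ≤ 1/2 * f (c i) (c (i+1)) := by
      intro i
      by_cases h : c i = c (i+1)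
      · simp [hA, hB, h, hf.1]
      · rw [mul_comm]
        exact key (c i) (c (i+1)) h
    calc ∑ i, (‖A i - A (i-1)‖ + ‖B i - B (i+1)‖) * ε
        = ∑ i, (‖A i - A (i+1)‖ + ‖B i - B (i+1)‖) * ε := by
          simp only [add_mul, Finset.sum_add_distrib, ← Finset.sum_mul, reA]
      _ ≤ ∑ i, 1/2 * f (c i) (c (i+1)) :=
          Finset.sum_le_sum (fun i _ => perterm i)
      _ = 1/2 * F := by rw [hF, Finset.mul_sum]
  -- nonnegativity of the perturbation square term
  have hsq : 0 ≤ 2*nα - 2*sαα' := by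
    have ptw : ∀ i : Fin (n+1), ‖α i - α (i+1)‖^2
        = ‖α i‖^2 - 2*⟪α i, α (i+1)⟫ + ‖α (i+1)‖^2 := by
      intro i
      rw [← real_inner_self_eq_norm_sq, ← real_inner_self_eq_norm_sq,
          ← real_inner_self_eq_norm_sq]
      simp only [inner_sub_left, inner_sub_right]
      rw [real_inner_comm (α (i+1)) (α i)]
      ring
    have h6 : (0:ℝ) ≤ ∑ i, ‖α i - α (i+1)‖^2 :=
      Finset.sum_nonneg (fun i _ => by positivity)
    rw [Finset.sum_congr rfl (fun i _ => ptw i)] at h6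
    rw [Finset.sum_add_distrib, Finset.sum_sub_distrib, ← Finset.mul_sum, rα] at h6
    linarith
  show ∑ i, ‖A i - B i‖^2 ≤ ∑ i, ‖(A i + α i) - (B (i+1) + α (i+1))‖^2
  rw [eL, eR]
  linarith
end
end

section
/- Let x₁,…,x_k, y₁,…,y_k ∈ ℝ^d with the yᵢ distinct, and suppose Γ = {(xᵢ,yᵢ)} is ε₀-robust for some ε₀ > 0. Then Γ is f-strongly cyclically monotone for some positive residual function f (equivalently, π = (1/k)∑δ(xᵢ,yᵢ) is the unique optimal quadratic-cost transport plan between (1/k)∑δ(xᵢ) and (1/k)∑δ(yᵢ)). -/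
open MeasureTheory ProbabilityTheory Metric
open scoped ENNReal NNReal

noncomputable section

section
open Finset
open Fin.NatCast

namespace Stmt10Aux

lemma mod_eval {α : Sort*} {N : ℕ} (hN : 0 < N) {u : ℕ → α} (hp : ∀ i, u (i + N) = u i) :
    ∀ i, u (i % N) = u i := by
  intro i
  induction i using Nat.strong_induction_on with
  | _ i ih =>
    rcases lt_or_ge i N with h | h
    · rw [Nat.mod_eq_of_lt h]
    · have h1 : i = (i - N) + N := by omega
      rw [h1, Nat.add_mod_right, hp]
      exact ih (i - N) (by omega)

lemma shift_one {M : Type*} [AddCommGroup M] {N : ℕ} {h : ℕ → M} (hp : ∀ i, h (i + N) = h i) :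
    ∑ i ∈ range N, h (i + 1) = ∑ i ∈ range N, h i := by
  have h1 : ∑ i ∈ range (N + 1), h i = ∑ i ∈ range N, h (i + 1) + h 0 :=
    Finset.sum_range_succ' h N
  have h2 : ∑ i ∈ range (N + 1), h i = ∑ i ∈ range N, h i + h N :=
    Finset.sum_range_succ h N
  have h3 : h N = h 0 := by have := hp 0; simpa using this
  rw [h3] at h2
  exact add_right_cancel (h1.symm.trans h2)

lemma shift_sum {M : Type*} [AddCommGroup M] {N : ℕ} {h : ℕ → M} (hp : ∀ i, h (i + N) = h i)
    (a : ℕ) : ∑ i ∈ range N, h (i + a) = ∑ i ∈ range N, h i := by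
  induction a with
  | zero => simp
  | succ a ih =>
    have : ∀ i, h (i + (a + 1)) = (fun j => h (j + 1)) (i + a) := by
      intro i; simp [Nat.add_assoc]  -- h (i + a + 1)
    have step : ∑ i ∈ range N, (fun j => h (j + a)) (i + 1) = ∑ i ∈ range N, (fun j => h (j + a)) i :=
      shift_one (h := fun j => h (j + a)) (fun i => by
        show h (i + N + a) = h (i + a)
        rw [show i + N + a = (i + a) + N by omega, hp])
    calc ∑ i ∈ range N, h (i + (a + 1)) = ∑ i ∈ range N, (fun j => h (j + a)) (i + 1) := by
          apply Finset.sum_congr rfl; intro i _; show h (i + (a+1)) = h (i + 1 + a); congr 1; omega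
      _ = ∑ i ∈ range N, h (i + a) := step
      _ = ∑ i ∈ range N, h i := ih

lemma mod_succ_eval {α : Sort*} {N : ℕ} (hN : 0 < N) {u : ℕ → α} (hp : ∀ i, u (i + N) = u i)
    (i : ℕ) : u (i % N + 1) = u (i + 1) := by
  have e1 : (i % N + 1) % N = (i + 1) % N := by
    conv_rhs => rw [Nat.add_mod]
    conv_lhs => rw [Nat.add_mod]
    simp [Nat.mod_mod]
  have := mod_eval hN hp (i % N + 1)
  rw [e1, mod_eval hN hp (i + 1)] at this
  exact this.symm

lemma cons_all {k N : ℕ} (hN : 0 < N) {u : ℕ → Fin k} (hp : ∀ i, u (i + N) = u i)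
    (hc : ∀ i < N, u i ≠ u (i + 1)) : ∀ i, u i ≠ u (i + 1) := by
  intro i
  have h1 := hc (i % N) (Nat.mod_lt _ hN)
  rwa [mod_eval hN hp, mod_succ_eval hN hp] at h1


-- Fin-sum to range-sum bridge for cyclic sums
lemma fin_cyc_sum {M : Type*} [AddCommMonoid M] {k n : ℕ} (c : Fin (n + 1) → Fin k)
    (F : Fin k → Fin k → M) :
    ∑ i : Fin (n + 1), F (c i) (c (i + 1)) =
      ∑ i ∈ range (n + 1), F (c (i : Fin (n+1))) (c ((i : Fin (n+1)) + 1)) := by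
  rw [← Fin.sum_univ_eq_sum_range (fun j : ℕ => F (c (j : Fin (n+1))) (c ((j : Fin (n+1)) + 1))) (n+1)]
  apply Finset.sum_congr rfl
  intro i _
  simp [Fin.cast_val_eq_self]

lemma natCast_periodic {k n : ℕ} (c : Fin (n + 1) → Fin k) (i : ℕ) :
    c ((i + (n + 1) : ℕ) : Fin (n+1)) = c (i : Fin (n+1)) := by
  congr 1
  push_cast
  simp

lemma natCast_succ {n : ℕ} (i : ℕ) : ((i + 1 : ℕ) : Fin (n+1)) = (i : Fin (n+1)) + 1 := by
  push_cast; ring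

-- value of (i+1 : Fin) under a periodic ℕ-function
lemma u_fin_succ {α : Sort*} {N : ℕ} [NeZero N] {u : ℕ → α} (hp : ∀ i, u (i + N) = u i)
    (i : Fin N) : u ((i + 1 : Fin N).val) = u (i.val + 1) := by
  have hN : 0 < N := Nat.pos_of_ne_zero (NeZero.ne N)
  have h : (i + 1 : Fin N).val = (i.val + 1 % N) % N := by
    rw [Fin.add_def, Fin.val_one']
  rw [h]
  have h2 : (i.val + 1 % N) % N = (i.val + 1) % N := by
    conv_lhs => rw [Nat.add_mod]
    conv_rhs => rw [Nat.add_mod]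
    simp [Nat.mod_mod]
  rw [h2, mod_eval hN hp]


lemma robN {d k : ℕ} {x y : Fin k → Ed d} {ε₀ : ℝ} (hrob : Robust x y ε₀)
    {N : ℕ} (hN : 0 < N) {u : ℕ → Fin k} (hp : ∀ i, u (i + N) = u i)
    (hinj : ∀ i, i < N → ∀ j, j < N → u i = u j → i = j)
    (β : ℕ → Ed d) (hβp : ∀ i, β (i + N) = β i) (hβ : ∀ i, ‖β i‖ ≤ ε₀) :
    ∑ i ∈ range N, ‖x (u i) - y (u i)‖ ^ 2 ≤
      ∑ i ∈ range N, ‖x (u i) + β i - (y (u (i + 1)) + β (i + 1))‖ ^ 2 := by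
  obtain ⟨n, rfl⟩ : ∃ n, N = n + 1 := ⟨N - 1, by omega⟩
  set c : Fin (n + 1) → Fin k := fun i => u i.val with hc
  have hcinj : Function.Injective c := by
    intro i j hij
    exact Fin.ext (hinj i.val i.isLt j.val j.isLt hij)
  have key := hrob n c hcinj (fun i => β i.val) (fun i => hβ i.val)
  rw [← Fin.sum_univ_eq_sum_range (fun j : ℕ => ‖x (u j) - y (u j)‖ ^ 2) (n + 1),
      ← Fin.sum_univ_eq_sum_range
        (fun j : ℕ => ‖x (u j) + β j - (y (u (j + 1)) + β (j + 1))‖ ^ 2) (n + 1)]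
  refine le_trans (le_of_eq rfl) (le_trans key (le_of_eq (Finset.sum_congr rfl ?_)))
  intro i _
  simp only [hc]
  rw [u_fin_succ hp i, u_fin_succ hβp i]


lemma sum_norm_add_sq {E : Type*} [NormedAddCommGroup E] [InnerProductSpace ℝ E]
    (s : Finset ℕ) (f g : ℕ → E) :
    ∑ i ∈ s, ‖f i + g i‖ ^ 2 =
      ∑ i ∈ s, ‖f i‖ ^ 2 + 2 * ∑ i ∈ s, (inner ℝ (f i) (g i) : ℝ) + ∑ i ∈ s, ‖g i‖ ^ 2 := by
  rw [Finset.mul_sum, ← Finset.sum_add_distrib, ← Finset.sum_add_distrib]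
  exact Finset.sum_congr rfl fun i _ => norm_add_sq_real _ _

lemma sum_norm_sub_sq {E : Type*} [NormedAddCommGroup E] [InnerProductSpace ℝ E]
    (s : Finset ℕ) (f g : ℕ → E) :
    ∑ i ∈ s, ‖f i - g i‖ ^ 2 =
      ∑ i ∈ s, ‖f i‖ ^ 2 - 2 * ∑ i ∈ s, (inner ℝ (f i) (g i) : ℝ) + ∑ i ∈ s, ‖g i‖ ^ 2 := by
  rw [Finset.mul_sum, ← Finset.sum_sub_distrib, ← Finset.sum_add_distrib]
  exact Finset.sum_congr rfl fun i _ => norm_sub_sq_real _ _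

/-- cost gap identity: ∑‖x_i - y_{i+1}‖² = ∑‖x_i - y_i‖² + 2 S. -/
lemma gap_eq {d k N : ℕ} (x y : Fin k → Ed d) (hN : 0 < N) {u : ℕ → Fin k}
    (hp : ∀ i, u (i + N) = u i) :
    ∑ i ∈ range N, ‖x (u i) - y (u (i + 1))‖ ^ 2 =
      ∑ i ∈ range N, ‖x (u i) - y (u i)‖ ^ 2 +
        2 * ∑ i ∈ range N, (inner ℝ (x (u i)) (y (u i) - y (u (i + 1))) : ℝ) := by
  have hshift : ∑ i ∈ range N, ‖y (u (i + 1))‖ ^ 2 = ∑ i ∈ range N, ‖y (u i)‖ ^ 2 :=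
    shift_one (h := fun i => ‖y (u i)‖ ^ 2) (fun i => by rw [hp])
  have l1 := sum_norm_sub_sq (range N) (fun i => x (u i)) (fun i => y (u (i + 1)))
  have l2 := sum_norm_sub_sq (range N) (fun i => x (u i)) (fun i => y (u i))
  have l3 : ∑ i ∈ range N, (inner ℝ (x (u i)) (y (u i) - y (u (i + 1))) : ℝ) =
      (∑ i ∈ range N, (inner ℝ (x (u i)) (y (u i)) : ℝ)) -
        ∑ i ∈ range N, (inner ℝ (x (u i)) (y (u (i + 1))) : ℝ) := by
    rw [← Finset.sum_sub_distrib]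
    exact Finset.sum_congr rfl fun i _ => inner_sub_right _ _ _
  linarith


lemma single_sum {M : Type*} [AddCommMonoid M] {N p : ℕ} (hpN : p < N) (f : ℕ → M) :
    ∑ i ∈ range N, (if i % N = p then f i else 0) = f p := by
  have h : ∀ i ∈ range N, (if i % N = p then f i else 0) = (if i = p then f i else 0) := by
    intro i hi; rw [Nat.mod_eq_of_lt (mem_range.mp hi)]
  rw [Finset.sum_congr rfl h, Finset.sum_ite_eq' (range N) p f]
  exact if_pos (mem_range.mpr hpN)

lemma keyA {d k : ℕ} {x y : Fin k → Ed d} (hy : Function.Injective y) {ε₀ : ℝ}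
    (hε₀ : 0 < ε₀) (hrob : Robust x y ε₀) {N : ℕ} (hN : 0 < N) {u : ℕ → Fin k}
    (hp : ∀ i, u (i + N) = u i)
    (hinj : ∀ i, i < N → ∀ j, j < N → u i = u j → i = j)
    (hc : ∀ i, u i ≠ u (i + 1)) :
    0 < ∑ i ∈ range N, (inner ℝ (x (u i)) (y (u i) - y (u (i + 1))) : ℝ) := by
  set S := ∑ i ∈ range N, (inner ℝ (x (u i)) (y (u i) - y (u (i + 1))) : ℝ) with hS
  have hgap := gap_eq x y hN hp (u := u)
  have hS0 : 0 ≤ S := by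
    have h := robN hrob hN hp hinj (fun _ => 0) (fun i => rfl) (fun i => by
      simpa using le_of_lt hε₀)
    simp only [add_zero] at h
    linarith
  rcases hS0.lt_or_eq with hlt | heq
  · exact hlt
  exfalso
  -- heq : 0 = S
  set b : ℕ → Ed d := fun i => x (u i) - y (u (i + 1)) with hb
  have hbper : ∀ i, b (i + N) = b i := by
    intro i
    simp only [hb]
    rw [hp, show i + N + 1 = (i + 1) + N by omega, hp]
  have hsumb : ∑ i ∈ range N, ‖b i‖ ^ 2 = ∑ i ∈ range N, ‖x (u i) - y (u i)‖ ^ 2 := by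
    simp only [hb]; linarith
  -- main inequality from single-spike perturbations
  have main : ∀ j, j < N → ∀ v : Ed d, ‖v‖ ≤ ε₀ →
      (inner ℝ (b j - b ((j + 1) % N)) v : ℝ) ≤ 2 * ‖v‖ ^ 2 := by
    intro j hj v hv
    set p := (j + 1) % N with hpdef
    have hpN : p < N := Nat.mod_lt _ hN
    set β : ℕ → Ed d := fun i => if i % N = p then v else 0 with hβ
    have hβper : ∀ i, β (i + N) = β i := by
      intro i; simp only [hβ, Nat.add_mod_right]
    have hβnorm : ∀ i, ‖β i‖ ≤ ε₀ := by
      intro i; simp only [hβ]; split_ifs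
      · exact hv
      · simpa using le_of_lt hε₀
    have hrN := robN hrob hN hp hinj β hβper hβnorm
    have hrw : ∀ i, ‖x (u i) + β i - (y (u (i + 1)) + β (i + 1))‖ ^ 2
        = ‖b i + (β i - β (i + 1))‖ ^ 2 := by
      intro i
      congr 2
      simp only [hb]
      abel
    rw [Finset.sum_congr rfl (fun i _ => hrw i),
        sum_norm_add_sq (range N) b (fun i => β i - β (i + 1))] at hrN
    -- compute the inner sum
    have hinner : ∑ i ∈ range N, (inner ℝ (b i) (β i - β (i + 1)) : ℝ)
        = (inner ℝ (b p) v : ℝ) - (inner ℝ (b j) v : ℝ) := by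
      have e1 : ∑ i ∈ range N, (inner ℝ (b i) (β i) : ℝ) = (inner ℝ (b p) v : ℝ) := by
        have : ∀ i ∈ range N, (inner ℝ (b i) (β i) : ℝ)
            = (if i % N = p then (inner ℝ (b i) v : ℝ) else 0) := by
          intro i _
          simp only [hβ]
          split_ifs <;> simp
        rw [Finset.sum_congr rfl this, single_sum hpN]
      have e2 : ∑ i ∈ range N, (inner ℝ (b i) (β (i + 1)) : ℝ) = (inner ℝ (b j) v : ℝ) := by
        have hcond : ∀ i, i < N → ((i + 1) % N = p ↔ i = j) := by
          intro i hi
          have h1 : (i + 1) % N = (j + 1) % N ↔ i = j := by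
            rcases Nat.lt_or_ge (i + 1) N with h | h
            · rw [Nat.mod_eq_of_lt h]
              rcases Nat.lt_or_ge (j + 1) N with h' | h'
              · rw [Nat.mod_eq_of_lt h']; omega
              · have hj1 : j + 1 = N := by omega
                rw [hj1, Nat.mod_self]; omega
            · have hi1 : i + 1 = N := by omega
              rw [hi1, Nat.mod_self]
              rcases Nat.lt_or_ge (j + 1) N with h' | h'
              · rw [Nat.mod_eq_of_lt h']; omega
              · have hj1 : j + 1 = N := by omega
                rw [hj1, Nat.mod_self]; omega
          rw [hpdef]
          exact h1
        have : ∀ i ∈ range N, (inner ℝ (b i) (β (i + 1)) : ℝ)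
            = (if i % N = j then (inner ℝ (b i) v : ℝ) else 0) := by
          intro i hi
          have hiN := mem_range.mp hi
          simp only [hβ, Nat.mod_eq_of_lt hiN]
          by_cases hcase : i = j
          · rw [if_pos hcase, if_pos (((hcond i hiN).mpr hcase))]
          · rw [if_neg hcase, if_neg (fun hh => hcase ((hcond i hiN).mp hh))]
            simp
        rw [Finset.sum_congr rfl this, single_sum hj]
      have e3 : ∑ i ∈ range N, (inner ℝ (b i) (β i - β (i + 1)) : ℝ)
          = ∑ i ∈ range N, ((inner ℝ (b i) (β i) : ℝ) - (inner ℝ (b i) (β (i + 1)) : ℝ)) :=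
        Finset.sum_congr rfl fun i _ => inner_sub_right _ _ _
      rw [e3, Finset.sum_sub_distrib, e1, e2]
    -- bound the quadratic term
    have hquad : ∑ i ∈ range N, ‖β i - β (i + 1)‖ ^ 2 ≤ 4 * ‖v‖ ^ 2 := by
      have step : ∀ i ∈ range N, ‖β i - β (i + 1)‖ ^ 2 ≤ 2 * ‖β i‖ ^ 2 + 2 * ‖β (i + 1)‖ ^ 2 := by
        intro i _
        nlinarith [norm_sub_sq_real (β i) (β (i + 1)), abs_real_inner_le_norm (β i) (β (i + 1)),
          sq_nonneg (‖β i‖ - ‖β (i + 1)‖), le_abs_self ((inner ℝ (β i) (β (i+1)) : ℝ)),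
          neg_abs_le ((inner ℝ (β i) (β (i+1)) : ℝ))]
      have h1 : ∑ i ∈ range N, ‖β i - β (i + 1)‖ ^ 2
          ≤ ∑ i ∈ range N, (2 * ‖β i‖ ^ 2 + 2 * ‖β (i + 1)‖ ^ 2) := Finset.sum_le_sum step
      have h2 : ∑ i ∈ range N, ‖β (i + 1)‖ ^ 2 = ∑ i ∈ range N, ‖β i‖ ^ 2 :=
        shift_one (h := fun i => ‖β i‖ ^ 2) (fun i => by rw [hβper])
      have h3 : ∑ i ∈ range N, ‖β i‖ ^ 2 = ‖v‖ ^ 2 := by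
        have : ∀ i ∈ range N, ‖β i‖ ^ 2 = (if i % N = p then ‖v‖ ^ 2 else 0) := by
          intro i _
          simp only [hβ]
          split_ifs <;> simp
        rw [Finset.sum_congr rfl this, single_sum hpN]
      rw [Finset.sum_add_distrib, ← Finset.mul_sum, ← Finset.mul_sum, h2, h3] at h1
      linarith
    rw [inner_sub_left]
    linarith
  -- b is constant on [0, N)
  have beq : ∀ j, j < N → b j = b ((j + 1) % N) := by
    intro j hj
    by_contra hne
    set w := b j - b ((j + 1) % N) with hw
    have hw0 : w ≠ 0 := sub_ne_zero.mpr hne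
    have hwn : 0 < ‖w‖ := norm_pos_iff.mpr hw0
    set t := min ε₀ (‖w‖ / 4) with ht
    have ht0 : 0 < t := lt_min hε₀ (by positivity)
    have htw : t ≤ ‖w‖ / 4 := min_le_right _ _
    have hvnorm : ‖(t / ‖w‖) • w‖ = t := by
      rw [norm_smul, Real.norm_eq_abs, abs_of_pos (by positivity)]
      field_simp
    have hle := main j hj ((t / ‖w‖) • w) (by rw [hvnorm]; exact min_le_left _ _)
    rw [real_inner_smul_right, real_inner_self_eq_norm_sq, hvnorm] at hle
    have : t / ‖w‖ * ‖w‖ ^ 2 = t * ‖w‖ := by field_simp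
    rw [this] at hle
    nlinarith
  have bconst : ∀ i, i < N → b i = b 0 := by
    intro i
    induction i with
    | zero => intro _; rfl
    | succ i ih =>
      intro hi
      have h1 := beq i (by omega)
      rw [Nat.mod_eq_of_lt hi] at h1
      rw [← h1]
      exact ih (by omega)
  -- conclude y (u 1) = y (u 0)
  set e : ℕ → Ed d := fun i => y (u (i + 1)) - y (u i) with he
  have hxy : ∀ i, x (u i) - y (u i) = b i + e i := by
    intro i; simp only [hb, he]; abel
  have hsum2 : ∑ i ∈ range N, ‖x (u i) - y (u i)‖ ^ 2
      = ∑ i ∈ range N, ‖b i‖ ^ 2 + 2 * ∑ i ∈ range N, (inner ℝ (b i) (e i) : ℝ)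
        + ∑ i ∈ range N, ‖e i‖ ^ 2 := by
    rw [← sum_norm_add_sq (range N) b e]
    exact Finset.sum_congr rfl fun i _ => by rw [hxy i]
  have hesum : ∑ i ∈ range N, e i = 0 := by
    simp only [he]
    rw [Finset.sum_sub_distrib]
    rw [shift_one (h := fun i => y (u i)) (fun i => by rw [hp])]
    simp
  have hbe : ∑ i ∈ range N, (inner ℝ (b i) (e i) : ℝ) = 0 := by
    have : ∀ i ∈ range N, (inner ℝ (b i) (e i) : ℝ) = (inner ℝ (b 0) (e i) : ℝ) := by
      intro i hi; rw [bconst i (mem_range.mp hi)]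
    rw [Finset.sum_congr rfl this, ← inner_sum, hesum, inner_zero_right]
  have hesq : ∑ i ∈ range N, ‖e i‖ ^ 2 = 0 := by linarith
  have he0 : e 0 = 0 := by
    have hnn : ∀ i ∈ range N, (0:ℝ) ≤ ‖e i‖ ^ 2 := fun i _ => by positivity
    have := (Finset.sum_eq_zero_iff_of_nonneg hnn).mp hesq 0 (mem_range.mpr hN)
    have : ‖e 0‖ = 0 := by nlinarith [norm_nonneg (e 0)]
    exact norm_eq_zero.mp this
  have : y (u 1) = y (u 0) := by
    have := sub_eq_zero.mp he0
    simpa using this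
  exact hc 0 (hy this).symm


def CycT (k : ℕ) : Type := Σ n : Fin k, (Fin (n.1 + 1) → Fin k)

instance (k : ℕ) : Fintype (CycT k) := by unfold CycT; infer_instance

open Classical in
def SF {d k : ℕ} (x y : Fin k → Ed d) (z : CycT k) : ℝ :=
  if (Function.Injective z.2 ∧ ∀ i, z.2 i ≠ z.2 (i + 1)) then
    ∑ i, (inner ℝ (x (z.2 i)) (y (z.2 i) - y (z.2 (i + 1))) : ℝ)
  else 1

def Aset {d k : ℕ} (x y : Fin k → Ed d) : Finset ℝ :=
  insert 1 (Finset.image (SF x y) Finset.univ)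

lemma Aset_nonempty {d k : ℕ} (x y : Fin k → Ed d) : (Aset x y).Nonempty :=
  ⟨1, Finset.mem_insert_self 1 _⟩

def Delta {d k : ℕ} (x y : Fin k → Ed d) : ℝ := (Aset x y).min' (Aset_nonempty x y)

lemma Delta_le {d k : ℕ} (x y : Fin k → Ed d) (z : CycT k) : Delta x y ≤ SF x y z :=
  Finset.min'_le _ _ (Finset.mem_insert_of_mem (Finset.mem_image_of_mem _ (Finset.mem_univ z)))

lemma Delta_le_one {d k : ℕ} (x y : Fin k → Ed d) : Delta x y ≤ 1 :=
  Finset.min'_le _ _ (Finset.mem_insert_self 1 _)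

lemma Delta_pos {d k : ℕ} {x y : Fin k → Ed d} (hy : Function.Injective y) {ε₀ : ℝ}
    (hε₀ : 0 < ε₀) (hrob : Robust x y ε₀) : 0 < Delta x y := by
  rw [Delta, Finset.lt_min'_iff]
  intro r hr
  rcases Finset.mem_insert.mp hr with h | h
  · rw [h]; norm_num
  obtain ⟨z, -, rfl⟩ := Finset.mem_image.mp h
  rw [SF]
  split_ifs with hcond
  swap
  · norm_num
  obtain ⟨hzinj, hzcons⟩ := hcond
  obtain ⟨n, c⟩ := z
  set u : ℕ → Fin k := fun i => c (i : Fin (n.1 + 1)) with hu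
  have hp : ∀ i, u (i + (n.1 + 1)) = u i := fun i => natCast_periodic c i
  have hinj : ∀ i, i < n.1 + 1 → ∀ j, j < n.1 + 1 → u i = u j → i = j := by
    intro i hi j hj hij
    have := hzinj hij
    have h1 : ((i : Fin (n.1+1))).val = i := Fin.val_cast_of_lt hi
    have h2 : ((j : Fin (n.1+1))).val = j := Fin.val_cast_of_lt hj
    rw [← h1, ← h2, this]
  have hcons : ∀ i, u i ≠ u (i + 1) := by
    intro i
    simp only [hu]
    rw [natCast_succ]
    exact hzcons _
  have hpos := keyA hy hε₀ hrob (Nat.succ_pos n.1) hp hinj hcons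
  refine lt_of_lt_of_le hpos (le_of_eq ?_)
  rw [fin_cyc_sum c (fun a b => (inner ℝ (x a) (y a - y b) : ℝ))]
  apply Finset.sum_congr rfl
  intro i _
  simp only [hu]
  rw [natCast_succ]

lemma Delta_le_S {d k : ℕ} (x y : Fin k → Ed d) {N : ℕ} (hN : 0 < N) {u : ℕ → Fin k}
    (hp : ∀ i, u (i + N) = u i)
    (hinj : ∀ i, i < N → ∀ j, j < N → u i = u j → i = j)
    (hcons : ∀ i, u i ≠ u (i + 1)) :
    Delta x y ≤ ∑ i ∈ range N, (inner ℝ (x (u i)) (y (u i) - y (u (i + 1))) : ℝ) := by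
  have hNk : N ≤ k := by
    have hfinj : Function.Injective (fun i : Fin N => u i.val) := by
      intro i j hij
      exact Fin.ext (hinj _ i.isLt _ j.isLt hij)
    simpa using Fintype.card_le_of_injective _ hfinj
  obtain ⟨n, rfl⟩ : ∃ n, N = n + 1 := ⟨N - 1, by omega⟩
  set z : CycT k := ⟨⟨n, by omega⟩, fun i : Fin (n + 1) => u i.val⟩ with hz
  have hcond : Function.Injective z.2 ∧ ∀ i, z.2 i ≠ z.2 (i + 1) := by
    constructor
    · intro i j hij
      exact Fin.ext (hinj _ i.isLt _ j.isLt hij)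
    · intro i
      show u i.val ≠ u ((i + 1 : Fin (n + 1)).val)
      rw [u_fin_succ hp i]
      exact hcons i.val
  have hthis := Delta_le x y z
  rw [SF, if_pos hcond] at hthis
  refine le_trans hthis (le_of_eq ?_)
  rw [← Fin.sum_univ_eq_sum_range
    (fun j : ℕ => (inner ℝ (x (u j)) (y (u j) - y (u (j + 1))) : ℝ)) (n + 1)]
  apply Finset.sum_congr rfl
  intro i _
  show (inner ℝ (x (u i.val)) (y (u i.val) - y (u ((i + 1 : Fin (n + 1)).val))) : ℝ) = _
  rw [u_fin_succ hp i]


lemma inj_card_le {k N : ℕ} {u : ℕ → Fin k}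
    (hinj : ∀ i, i < N → ∀ j, j < N → u i = u j → i = j) : N ≤ k := by
  have hfinj : Function.Injective (fun i : Fin N => u i.val) := by
    intro i j hij
    exact Fin.ext (hinj _ i.isLt _ j.isLt hij)
  simpa using Fintype.card_le_of_injective _ hfinj

lemma recursion {d k : ℕ} {x y : Fin k → Ed d} (hy : Function.Injective y) {ε₀ : ℝ}
    (hε₀ : 0 < ε₀) (hrob : Robust x y ε₀) :
    ∀ N : ℕ, 0 < N → ∀ u : ℕ → Fin k, (∀ i, u (i + N) = u i) → (∀ i, u i ≠ u (i + 1)) →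
      (N : ℝ) * (Delta x y / k) ≤
        ∑ i ∈ range N, (inner ℝ (x (u i)) (y (u i) - y (u (i + 1))) : ℝ) := by
  intro N
  induction N using Nat.strong_induction_on with
  | _ N ih =>
  intro hN u hp hcons
  have hΔ : 0 < Delta x y := Delta_pos hy hε₀ hrob
  have hk0 : 0 < k := (u 0).pos
  by_cases hinj : ∀ i, i < N → ∀ j, j < N → u i = u j → i = j
  · -- injective cycle: use the minimum Delta
    have h1 := Delta_le_S x y hN hp hinj (u := u) hcons
    have hNk : N ≤ k := inj_card_le hinj
    calc (N : ℝ) * (Delta x y / k) ≤ (k : ℝ) * (Delta x y / k) := by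
          apply mul_le_mul_of_nonneg_right
          · exact_mod_cast hNk
          · positivity
      _ = Delta x y := by field_simp
      _ ≤ _ := h1
  · -- non-injective: split the cycle
    push_neg at hinj
    obtain ⟨i0, hi0, j0, hj0, hij0, hne0⟩ := hinj
    obtain ⟨a, b, hab, hbN, huab⟩ : ∃ a b, a < b ∧ b < N ∧ u a = u b := by
      rcases Nat.lt_or_ge i0 j0 with h | h
      · exact ⟨i0, j0, h, hj0, hij0⟩
      · exact ⟨j0, i0, by omega, hi0, hij0.symm⟩
    set u' : ℕ → Fin k := fun i => u (i + a) with hu'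
    have hp' : ∀ i, u' (i + N) = u' i := by
      intro i
      show u (i + N + a) = u (i + a)
      rw [show i + N + a = (i + a) + N by omega, hp]
    have hcons' : ∀ i, u' i ≠ u' (i + 1) := by
      intro i
      show u (i + a) ≠ u (i + 1 + a)
      rw [show i + 1 + a = (i + a) + 1 by omega]
      exact hcons (i + a)
    set m := b - a with hm
    have hm1 : 0 < m := by omega
    have hmN : m < N := by omega
    have h0m : u' 0 = u' m := by
      show u (0 + a) = u (m + a)
      rw [show 0 + a = a by omega, show m + a = b by omega]
      exact huab
    have hm2 : 2 ≤ m := by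
      by_contra hcon
      have hmeq : m = 1 := by omega
      rw [hmeq] at h0m
      exact hcons' 0 (by simpa using h0m)
    have hmN2 : m + 2 ≤ N := by
      by_contra hcon
      have hmeq : m = N - 1 := by omega
      have hNu : u' (N - 1 + 1) = u' 0 := by
        rw [show N - 1 + 1 = 0 + N by omega]
        exact hp' 0
      apply hcons' (N - 1)
      rw [hNu, ← hmeq]
      exact h0m.symm
    set q := N - m with hq
    have hq1 : 0 < q := by omega
    have hqN : q < N := by omega
    -- first sub-cycle
    set u1 : ℕ → Fin k := fun i => u' (i % m) with hu1
    have hp1 : ∀ i, u1 (i + m) = u1 i := by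
      intro i; show u' ((i + m) % m) = u' (i % m); rw [Nat.add_mod_right]
    have hval1 : ∀ i, i < m → u1 i = u' i := by
      intro i hi; show u' (i % m) = u' i; rw [Nat.mod_eq_of_lt hi]
    have hsucc1 : ∀ i, i < m → u1 (i + 1) = u' (i + 1) := by
      intro i hi
      rcases Nat.lt_or_ge (i + 1) m with h | h
      · exact hval1 _ h
      · have h1 : i + 1 = m := by omega
        show u' ((i + 1) % m) = u' (i + 1)
        rw [h1, Nat.mod_self, h0m]
    have hcons1 : ∀ i, u1 i ≠ u1 (i + 1) :=
      cons_all hm1 hp1 (fun i hi => by rw [hval1 i hi, hsucc1 i hi]; exact hcons' i)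
    have hsum1 : ∑ i ∈ range m, (inner ℝ (x (u1 i)) (y (u1 i) - y (u1 (i + 1))) : ℝ)
        = ∑ i ∈ range m, (inner ℝ (x (u' i)) (y (u' i) - y (u' (i + 1))) : ℝ) := by
      apply Finset.sum_congr rfl
      intro i hi
      rw [hval1 i (mem_range.mp hi), hsucc1 i (mem_range.mp hi)]
    -- second sub-cycle
    set u2 : ℕ → Fin k := fun i => u' (m + i % q) with hu2
    have hp2 : ∀ i, u2 (i + q) = u2 i := by
      intro i; show u' (m + (i + q) % q) = u' (m + i % q); rw [Nat.add_mod_right]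
    have hval2 : ∀ i, i < q → u2 i = u' (m + i) := by
      intro i hi; show u' (m + i % q) = u' (m + i); rw [Nat.mod_eq_of_lt hi]
    have hsucc2 : ∀ i, i < q → u2 (i + 1) = u' (m + i + 1) := by
      intro i hi
      rcases Nat.lt_or_ge (i + 1) q with h | h
      · show u' (m + (i + 1) % q) = u' (m + i + 1)
        rw [Nat.mod_eq_of_lt h, show m + (i + 1) = m + i + 1 by omega]
      · have h1 : i + 1 = q := by omega
        show u' (m + (i + 1) % q) = u' (m + i + 1)
        rw [h1, Nat.mod_self, Nat.add_zero]
        have h2 : u' (m + i + 1) = u' N := by rw [show m + i + 1 = N by omega]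
        have h3 : u' N = u' 0 := by
          rw [show N = 0 + N by omega]; exact hp' 0
        rw [h2, h3, h0m]
    have hcons2 : ∀ i, u2 i ≠ u2 (i + 1) :=
      cons_all hq1 hp2 (fun i hi => by rw [hval2 i hi, hsucc2 i hi]; exact hcons' (m + i))
    have hsum2 : ∑ i ∈ range q, (inner ℝ (x (u2 i)) (y (u2 i) - y (u2 (i + 1))) : ℝ)
        = ∑ i ∈ range q, (inner ℝ (x (u' (m + i))) (y (u' (m + i)) - y (u' (m + i + 1))) : ℝ) := by
      apply Finset.sum_congr rfl
      intro i hi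
      rw [hval2 i (mem_range.mp hi), hsucc2 i (mem_range.mp hi)]
    -- splitting the rotated cycle
    have hsplit : ∑ i ∈ range N, (inner ℝ (x (u' i)) (y (u' i) - y (u' (i + 1))) : ℝ)
        = ∑ i ∈ range m, (inner ℝ (x (u' i)) (y (u' i) - y (u' (i + 1))) : ℝ)
          + ∑ i ∈ range q, (inner ℝ (x (u' (m + i))) (y (u' (m + i)) - y (u' (m + i + 1))) : ℝ) := by
      rw [show N = m + q by omega,
        Finset.sum_range_add (fun i => (inner ℝ (x (u' i)) (y (u' i) - y (u' (i + 1))) : ℝ)) m q]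
    -- rotation invariance
    have hrot : ∑ i ∈ range N, (inner ℝ (x (u' i)) (y (u' i) - y (u' (i + 1))) : ℝ)
        = ∑ i ∈ range N, (inner ℝ (x (u i)) (y (u i) - y (u (i + 1))) : ℝ) := by
      have hterm : ∀ i, (inner ℝ (x (u' i)) (y (u' i) - y (u' (i + 1))) : ℝ)
          = (fun j => (inner ℝ (x (u j)) (y (u j) - y (u (j + 1))) : ℝ)) (i + a) := by
        intro i
        show (inner ℝ (x (u (i + a))) (y (u (i + a)) - y (u (i + 1 + a))) : ℝ) = _
        rw [show i + 1 + a = (i + a) + 1 by omega]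
      rw [Finset.sum_congr rfl (fun i _ => hterm i)]
      exact shift_sum (h := fun j => (inner ℝ (x (u j)) (y (u j) - y (u (j + 1))) : ℝ))
        (fun i => by
          show (inner ℝ (x (u (i + N))) (y (u (i + N)) - y (u (i + N + 1))) : ℝ) = _
          rw [hp, show i + N + 1 = (i + 1) + N by omega, hp]) a
    have ih1 := ih m hmN hm1 u1 hp1 hcons1
    have ih2 := ih q hqN hq1 u2 hp2 hcons2
    rw [hsum1] at ih1
    rw [hsum2] at ih2
    have hmq : (m : ℝ) + (q : ℝ) = (N : ℝ) := by
      have : m + q = N := by omega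
      exact_mod_cast congrArg (Nat.cast : ℕ → ℝ) this
    calc (N : ℝ) * (Delta x y / k)
        = (m : ℝ) * (Delta x y / k) + (q : ℝ) * (Delta x y / k) := by
          rw [← add_mul, hmq]
      _ ≤ _ := by
          rw [← hrot, hsplit]
          exact add_le_add ih1 ih2


end Stmt10Aux


end

open Finset Stmt10Aux Fin.NatCast in
/-- positive robustness implies strong cyclical monotonicity for some
positive residual function. -/
theorem stmt10 {d k : ℕ} (x y : Fin k → Ed d) (hy : Function.Injective y)
    (ε₀ : ℝ) (hε₀ : 0 < ε₀) (hrob : Robust x y ε₀) :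
    ∃ f : Fin k → Fin k → ℝ, PosResidual f ∧ StrongCM x y f := by

  classical
  refine ⟨fun i j => if i = j then 0 else Delta x y / k, ⟨?_, ?_, ?_⟩, ?_⟩
  · intro i; simp
  · intro i j hij
    show (0 : ℝ) < if i = j then 0 else Delta x y / k
    rw [if_neg hij]
    have hk0 : 0 < k := i.pos
    have hΔ := Delta_pos hy hε₀ hrob
    positivity
  · intro i j
    show (if i = j then (0 : ℝ) else Delta x y / k) = if j = i then (0 : ℝ) else Delta x y / k
    by_cases h : i = j
    · simp [h]
    · rw [if_neg h, if_neg (fun hh => h hh.symm)]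
  · intro n c hc
    show ∑ i : Fin (n + 1), (inner ℝ (x (c i)) (y (c i) - y (c (i + 1))) : ℝ) ≥
      ∑ i : Fin (n + 1), (if c i = c (i + 1) then (0 : ℝ) else Delta x y / k)
    have hfsum : ∑ i : Fin (n + 1), (if c i = c (i + 1) then (0 : ℝ) else Delta x y / k)
        = ((n + 1 : ℕ) : ℝ) * (Delta x y / k) := by
      rw [Finset.sum_congr rfl (fun i _ => if_neg (hc i))]
      simp [Finset.sum_const, Finset.card_univ, nsmul_eq_mul]
    set u : ℕ → Fin k := fun i => c (i : Fin (n + 1)) with hu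
    have hp : ∀ i, u (i + (n + 1)) = u i := fun i => natCast_periodic c i
    have hcons : ∀ i, u i ≠ u (i + 1) := by
      intro i; simp only [hu]; rw [natCast_succ]; exact hc _
    have hrec := recursion hy hε₀ hrob (n + 1) (Nat.succ_pos n) u hp hcons
    have hLHS : ∑ i : Fin (n + 1), (inner ℝ (x (c i)) (y (c i) - y (c (i + 1))) : ℝ)
        = ∑ i ∈ range (n + 1), (inner ℝ (x (u i)) (y (u i) - y (u (i + 1))) : ℝ) := by
      rw [fin_cyc_sum c (fun a b => (inner ℝ (x a) (y a - y b) : ℝ))]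
      apply Finset.sum_congr rfl
      intro i _
      simp only [hu]
      rw [natCast_succ]
    rw [ge_iff_le, hfsum, hLHS]
    exact hrec
end
end

section
/- Let x₁,…,x_k, y₁,…,y_k ∈ ℝ^d and suppose Γ = {(xᵢ,yᵢ)} is f-strongly cyclically monotone for some positive residual function f. Let M = max{maxᵢ‖xᵢ‖, maxᵢ‖yᵢ‖}. Then Γ is ε-robust for any ε > 0 with 4Mε < min_{i≠j} f(i,j). -/
open MeasureTheory ProbabilityTheory Metric
open scoped ENNReal NNReal

noncomputable section

/-- strong cyclical monotonicity implies `ε`-robustness whenever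
`4Mε < min_{i≠j} f(i,j)` with `M` the largest norm among the atoms. -/
theorem stmt11 {d k : ℕ} (hk : 0 < k) (x y : Fin k → Ed d)
    (f : Fin k → Fin k → ℝ) (hf : PosResidual f) (hscm : StrongCM x y f)
    (M : ℝ) (hM : M = max (⨆ i, ‖x i‖) (⨆ i, ‖y i‖))
    (ε : ℝ) (hε : 0 < ε) (h4 : ∀ i j, i ≠ j → 4 * M * ε < f i j) :
    Robust x y ε := by

  have hMx : ∀ i, ‖x i‖ ≤ M := by
    intro i
    rw [hM]
    exact le_max_of_le_left (le_ciSup (f := fun j => ‖x j‖)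
      (Set.Finite.bddAbove (Set.finite_range _)) i)
  have hMy : ∀ i, ‖y i‖ ≤ M := by
    intro i
    rw [hM]
    exact le_max_of_le_right (le_ciSup (f := fun j => ‖y j‖)
      (Set.Finite.bddAbove (Set.finite_range _)) i)
  have hM0 : 0 ≤ M := le_trans (norm_nonneg _) (hMx ⟨0, hk⟩)
  intro n c hc α hα
  rcases n with _ | m
  · apply le_of_eq
    apply Finset.sum_congr rfl
    intro i _
    have h1 : i + 1 = i := by fin_cases i <;> decide
    rw [h1]
    congr 1
    abel
  · have hne : ∀ i : Fin (m+2), c i ≠ c (i+1) := by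
      intro i h
      have h2 := hc h
      exact one_ne_zero (left_eq_add.mp h2)
    -- expand each perturbed term
    have expand : ∀ i : Fin (m+2),
        ‖(x (c i) + α i) - (y (c (i+1)) + α (i+1))‖^2
          = ‖x (c i) - y (c (i+1))‖^2
            + 2 * (inner ℝ (x (c i) - y (c (i+1))) (α i - α (i+1)) : ℝ)
            + ‖α i - α (i+1)‖^2 := by
      intro i
      have h0 : (x (c i) + α i) - (y (c (i+1)) + α (i+1))
          = (x (c i) - y (c (i+1))) + (α i - α (i+1)) := by abel
      rw [h0, norm_add_sq_real]
    have hexp : ∑ i : Fin (m+2), ‖(x (c i) + α i) - (y (c (i+1)) + α (i+1))‖^2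
        = ∑ i : Fin (m+2), ‖x (c i) - y (c (i+1))‖^2
          + 2 * ∑ i : Fin (m+2), (inner ℝ (x (c i) - y (c (i+1))) (α i - α (i+1)) : ℝ)
          + ∑ i : Fin (m+2), ‖α i - α (i+1)‖^2 := by
      rw [Finset.sum_congr rfl fun i _ => expand i, Finset.sum_add_distrib,
        Finset.sum_add_distrib, ← Finset.mul_sum]
    -- the shift identity
    have hshift : ∑ i : Fin (m+2), ‖y (c (i+1))‖^2 = ∑ i : Fin (m+2), ‖y (c i)‖^2 :=
      Fintype.sum_equiv (Equiv.addRight (1 : Fin (m+2))) _ _ (fun i => rfl)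
    have key : ∑ i : Fin (m+2), ‖x (c i) - y (c (i+1))‖^2
        = ∑ i : Fin (m+2), ‖x (c i) - y (c i)‖^2
          + 2 * ∑ i : Fin (m+2), (inner ℝ (x (c i)) (y (c i) - y (c (i+1))) : ℝ) := by
      simp only [norm_sub_sq_real, inner_sub_right, Finset.sum_add_distrib,
        Finset.sum_sub_distrib, Finset.mul_sum, mul_sub]
      linarith [hshift]
    -- bound on the middle term
    have innerbound : ∀ i : Fin (m+2),
        -(4 * M * ε) ≤ (inner ℝ (x (c i) - y (c (i+1))) (α i - α (i+1)) : ℝ) := by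
      intro i
      have h1 := abs_real_inner_le_norm (x (c i) - y (c (i+1))) (α i - α (i+1))
      have h2 : ‖x (c i) - y (c (i+1))‖ ≤ 2 * M := by
        have := hMx (c i); have := hMy (c (i+1))
        calc ‖x (c i) - y (c (i+1))‖ ≤ ‖x (c i)‖ + ‖y (c (i+1))‖ := norm_sub_le _ _
          _ ≤ 2 * M := by linarith
      have h3 : ‖α i - α (i+1)‖ ≤ 2 * ε := by
        have := hα i; have := hα (i+1)
        calc ‖α i - α (i+1)‖ ≤ ‖α i‖ + ‖α (i+1)‖ := norm_sub_le _ _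
          _ ≤ 2 * ε := by linarith
      have h4' : ‖x (c i) - y (c (i+1))‖ * ‖α i - α (i+1)‖ ≤ (2*M) * (2*ε) :=
        mul_le_mul h2 h3 (norm_nonneg _) (by linarith)
      have h5 := neg_abs_le (inner ℝ (x (c i) - y (c (i+1))) (α i - α (i+1)) : ℝ)
      nlinarith
    have hconst : ∑ _i : Fin (m+2), (4*M*ε) = ((m+2 : ℕ) : ℝ) * (4*M*ε) := by
      rw [Finset.sum_const, Finset.card_univ, Fintype.card_fin, nsmul_eq_mul]
    have hsumib : -(((m+2 : ℕ) : ℝ) * (4 * M * ε))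
        ≤ ∑ i : Fin (m+2), (inner ℝ (x (c i) - y (c (i+1))) (α i - α (i+1)) : ℝ) := by
      have h0 := Finset.sum_le_sum (fun i (_ : i ∈ Finset.univ) => innerbound i)
      rwa [Finset.sum_neg_distrib, hconst] at h0
    have hαsq : (0:ℝ) ≤ ∑ i : Fin (m+2), ‖α i - α (i+1)‖^2 :=
      Finset.sum_nonneg fun i _ => by positivity
    have scm := hscm (m+1) c hne
    have fsum : (((m+2 : ℕ) : ℝ)) * (4 * M * ε) < ∑ i : Fin (m+2), f (c i) (c (i+1)) := by
      have h1 : ∑ _i : Fin (m+2), (4 * M * ε) < ∑ i : Fin (m+2), f (c i) (c (i+1)) :=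
        Finset.sum_lt_sum_of_nonempty Finset.univ_nonempty
          (fun i _ => h4 _ _ (hne i))
      rwa [hconst] at h1
    rw [hexp, key]
    push_cast at hsumib fsum
    linarith
end
end

section
/- Let μ = ∑ᵢ αᵢ δ(xᵢ) and ν = ∑ⱼ βⱼ δ(yⱼ) be discrete probability measures on ℝ^d, and let π be an optimal quadratic-cost coupling. Suppose π puts mass on both (x₁,y₁) and (x₁,y₂) with y₁ ≠ y₂, and let λ = min{π({(x₁,y₁)}), π({(x₁,y₂)})} > 0. Define μ̃ = 2λδ(x₁), ν̃ = λδ(y₁) + λδ(y₂), μ̂ = μ − μ̃, ν̂ = ν − ν̃. Then W₂²(μ, ν) = W₂²(μ̂, ν̂) + W₂²(μ̃, ν̃), where W₂² of sub-probability measures with equal mass is defined by the same infimum over couplings. -/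
open MeasureTheory ProbabilityTheory Metric
open scoped ENNReal NNReal

noncomputable section

private lemma cost_integrable {d : ℕ} (γ : Measure (Ed d × Ed d)) (S T : Set (Ed d))
    (hS : S.Finite) (hT : T.Finite)
    (h1 : γ.map Prod.fst Sᶜ = 0) (h2 : γ.map Prod.snd Tᶜ = 0)
    (hfin : γ.map Prod.fst Set.univ ≠ ⊤) :
    Integrable (fun p : Ed d × Ed d => ‖p.1 - p.2‖ ^ 2) γ := by
  have hγuniv : γ Set.univ ≠ ⊤ := by
    rwa [Measure.map_apply measurable_fst MeasurableSet.univ, Set.preimage_univ] at hfin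
  have hγfin : IsFiniteMeasure γ := ⟨lt_top_iff_ne_top.mpr hγuniv⟩
  have hSm : MeasurableSet S := hS.measurableSet
  have hTm : MeasurableSet T := hT.measurableSet
  have h1' : γ (Prod.fst ⁻¹' Sᶜ) = 0 := by
    rwa [Measure.map_apply measurable_fst hSm.compl] at h1
  have h2' : γ (Prod.snd ⁻¹' Tᶜ) = 0 := by
    rwa [Measure.map_apply measurable_snd hTm.compl] at h2
  have hF : γ ((S ×ˢ T)ᶜ) = 0 := by
    refine measure_mono_null ?_ (measure_union_null h1' h2')
    intro p hp
    simp only [Set.mem_compl_iff, Set.mem_prod, not_and_or] at hp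
    simpa using hp
  obtain ⟨C, hC⟩ := ((hS.prod hT).image (fun p : Ed d × Ed d => ‖p.1 - p.2‖ ^ 2)).bddAbove
  refine (integrable_const C).mono' ?_ ?_
  · exact ((continuous_fst.sub continuous_snd).norm.pow 2).aestronglyMeasurable
  · filter_upwards [measure_eq_zero_iff_ae_notMem.mp hF] with p hp
    rw [Set.mem_compl_iff, not_not] at hp
    have : ‖p.1 - p.2‖ ^ 2 ≤ C := hC (Set.mem_image_of_mem _ hp)
    rwa [Real.norm_of_nonneg (by positivity)]


private lemma cost_nonneg {d : ℕ} (γ : Measure (Ed d × Ed d)) : 0 ≤ cost γ :=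
  integral_nonneg fun p => by positivity

/-- splitting off a one-point-to-two-points piece of an optimal plan
decomposes the squared transport cost additively. -/
theorem stmt17 {d m n : ℕ} (x : Fin m → Ed d) (y : Fin n → Ed d)
    (αw : Fin m → ℝ≥0∞) (βw : Fin n → ℝ≥0∞)
    (hα : ∑ i, αw i = 1) (hβ : ∑ j, βw j = 1)
    (μ ν : Measure (Ed d))
    (hμ : μ = ∑ i, αw i • Measure.dirac (x i))
    (hν : ν = ∑ j, βw j • Measure.dirac (y j))
    (π : Measure (Ed d × Ed d)) (hπ : π ∈ Couplings μ ν)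
    (hopt : ∀ γ ∈ Couplings μ ν, cost π ≤ cost γ)
    (i₀ : Fin m) (j₁ j₂ : Fin n) (hyy : y j₁ ≠ y j₂)
    (lam : ℝ≥0∞) (hlam : lam = min (π {(x i₀, y j₁)}) (π {(x i₀, y j₂)}))
    (hlam0 : 0 < lam) :
    W2sq μ ν =
      W2sq (μ - (2 * lam) • Measure.dirac (x i₀))
          (ν - (lam • Measure.dirac (y j₁) + lam • Measure.dirac (y j₂)))
        + W2sq ((2 * lam) • Measure.dirac (x i₀))
            (lam • Measure.dirac (y j₁) + lam • Measure.dirac (y j₂)) := by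
  classical
  obtain ⟨hπf, hπs⟩ := hπ
  set p₁ : Ed d × Ed d := (x i₀, y j₁) with hp₁
  set p₂ : Ed d × Ed d := (x i₀, y j₂) with hp₂
  have hp12 : p₁ ≠ p₂ := by
    simp only [hp₁, hp₂, ne_eq, Prod.mk.injEq, not_and]
    exact fun _ => hyy
  set S : Set (Ed d) := Set.range x with hSdef
  set T : Set (Ed d) := Set.range y with hTdef
  have hS : S.Finite := Set.finite_range x
  have hT : T.Finite := Set.finite_range y
  -- mass facts
  have hμuniv : μ Set.univ = 1 := by
    rw [hμ]
    simp only [Measure.finset_sum_apply, Measure.smul_apply, smul_eq_mul,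
      measure_univ, mul_one]
    exact hα
  have hνuniv : ν Set.univ = 1 := by
    rw [hν]
    simp only [Measure.finset_sum_apply, Measure.smul_apply, smul_eq_mul,
      measure_univ, mul_one]
    exact hβ
  have hπuniv : π Set.univ = 1 := by
    have h : (π.map Prod.fst) Set.univ = 1 := by rw [hπf]; exact hμuniv
    rwa [Measure.map_apply measurable_fst MeasurableSet.univ, Set.preimage_univ] at h
  have hlam1 : lam ≤ π {p₁} := hlam ▸ min_le_left _ _
  have hlam2 : lam ≤ π {p₂} := hlam ▸ min_le_right _ _
  have hlamtop : lam ≠ ⊤ := by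
    refine ne_top_of_le_ne_top ?_ (hlam1.trans (measure_mono (Set.subset_univ _)))
    rw [hπuniv]; exact ENNReal.one_ne_top
  -- the small plan
  set πt : Measure (Ed d × Ed d) := lam • Measure.dirac p₁ + lam • Measure.dirac p₂ with hπtdef
  haveI : IsFiniteMeasure πt := by
    constructor
    simp only [hπtdef, Measure.add_apply, Measure.smul_apply, smul_eq_mul, measure_univ, mul_one]
    exact ENNReal.add_lt_top.mpr ⟨hlamtop.lt_top, hlamtop.lt_top⟩
  have hπtle : πt ≤ π := by
    rw [Measure.le_iff']
    intro s
    simp only [hπtdef, Measure.add_apply, Measure.smul_apply, smul_eq_mul,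
      Measure.dirac_apply, Set.indicator_apply, Pi.one_apply]
    by_cases h1 : p₁ ∈ s <;> by_cases h2 : p₂ ∈ s <;> simp [h1, h2]
    · calc lam + lam ≤ π {p₁} + π {p₂} := add_le_add hlam1 hlam2
        _ = π ({p₁} ∪ {p₂}) :=
          (measure_union (Set.disjoint_singleton.mpr hp12) (measurableSet_singleton _)).symm
        _ ≤ π s := measure_mono (by simp [Set.insert_subset_iff, h1, h2])
    · exact hlam1.trans (measure_mono (Set.singleton_subset_iff.mpr h1))
    · exact hlam2.trans (measure_mono (Set.singleton_subset_iff.mpr h2))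
  set πh : Measure (Ed d × Ed d) := π - πt with hπhdef
  have hsplit : πh + πt = π := Measure.sub_add_cancel_of_le hπtle
  -- marginals of πt
  set μt : Measure (Ed d) := (2 * lam) • Measure.dirac (x i₀) with hμtdef
  set νt : Measure (Ed d) := lam • Measure.dirac (y j₁) + lam • Measure.dirac (y j₂) with hνtdef
  have hπtf : πt.map Prod.fst = μt := by
    rw [hπtdef, Measure.map_add _ _ measurable_fst, Measure.map_smul, Measure.map_smul,
      Measure.map_dirac' measurable_fst, Measure.map_dirac' measurable_fst]
    show lam • Measure.dirac (x i₀) + lam • Measure.dirac (x i₀) = _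
    rw [hμtdef, ← add_smul, ← two_mul]
  have hπts : πt.map Prod.snd = νt := by
    rw [hπtdef, Measure.map_add _ _ measurable_snd, Measure.map_smul, Measure.map_smul,
      Measure.map_dirac' measurable_snd, Measure.map_dirac' measurable_snd]
  haveI : IsFiniteMeasure μt := by
    constructor
    simp only [hμtdef, Measure.smul_apply, smul_eq_mul, measure_univ, mul_one]
    exact ENNReal.mul_lt_top (by norm_num) hlamtop.lt_top
  haveI : IsFiniteMeasure νt := by
    constructor
    simp only [hνtdef, Measure.add_apply, Measure.smul_apply, smul_eq_mul, measure_univ, mul_one]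
    exact ENNReal.add_lt_top.mpr ⟨hlamtop.lt_top, hlamtop.lt_top⟩
  -- marginals of πh
  have haddf : πh.map Prod.fst + μt = μ := by
    rw [← hπtf, ← Measure.map_add _ _ measurable_fst, hsplit, hπf]
  have hadds : πh.map Prod.snd + νt = ν := by
    rw [← hπts, ← Measure.map_add _ _ measurable_snd, hsplit, hπs]
  have hμhf : πh.map Prod.fst = μ - μt := by
    rw [← haddf, Measure.add_sub_cancel]
  have hνhs : πh.map Prod.snd = ν - νt := by
    rw [← hadds, Measure.add_sub_cancel]
  set μh : Measure (Ed d) := μ - μt with hμhdef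
  set νh : Measure (Ed d) := ν - νt with hνhdef
  have hπhC : πh ∈ Couplings μh νh := ⟨hμhf, hνhs⟩
  have hπtC : πt ∈ Couplings μt νt := ⟨hπtf, hπts⟩
  have hμtle : μt ≤ μ := by rw [← haddf]; exact Measure.le_add_left le_rfl
  have hνtle : νt ≤ ν := by rw [← hadds]; exact Measure.le_add_left le_rfl
  have hμadd : μh + μt = μ := Measure.sub_add_cancel_of_le hμtle
  have hνadd : νh + νt = ν := Measure.sub_add_cancel_of_le hνtle
  -- support facts
  have hμS : μ Sᶜ = 0 := by
    rw [hμ]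
    simp only [Measure.finset_sum_apply, Measure.smul_apply, smul_eq_mul,
      Measure.dirac_apply, Set.indicator_apply, Set.mem_compl_iff, hSdef, Set.mem_range]
    simp
  have hνT : ν Tᶜ = 0 := by
    rw [hν]
    simp only [Measure.finset_sum_apply, Measure.smul_apply, smul_eq_mul,
      Measure.dirac_apply, Set.indicator_apply, Set.mem_compl_iff, hTdef, Set.mem_range]
    simp
  have hμhS : μh Sᶜ = 0 := le_antisymm (hμS ▸ Measure.le_iff'.mp Measure.sub_le Sᶜ) zero_le
  have hνhT : νh Tᶜ = 0 := le_antisymm (hνT ▸ Measure.le_iff'.mp Measure.sub_le Tᶜ) zero_le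
  have hμtS : μt Sᶜ = 0 := le_antisymm (hμS ▸ Measure.le_iff'.mp hμtle Sᶜ) zero_le
  have hνtT : νt Tᶜ = 0 := le_antisymm (hνT ▸ Measure.le_iff'.mp hνtle Tᶜ) zero_le
  have hμhuniv : μh Set.univ ≠ ⊤ := by
    refine ne_top_of_le_ne_top ?_ (Measure.le_iff'.mp Measure.sub_le Set.univ)
    rw [hμuniv]; exact ENNReal.one_ne_top
  have hμtuniv : μt Set.univ ≠ ⊤ := by
    refine ne_top_of_le_ne_top ?_ (Measure.le_iff'.mp hμtle Set.univ)
    rw [hμuniv]; exact ENNReal.one_ne_top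
  -- integrability of cost on any relevant coupling
  have key : ∀ (μ' ν' : Measure (Ed d)), μ' Sᶜ = 0 → ν' Tᶜ = 0 → μ' Set.univ ≠ ⊤ →
      ∀ γ ∈ Couplings μ' ν', Integrable (fun p : Ed d × Ed d => ‖p.1 - p.2‖ ^ 2) γ := by
    intro μ' ν' h1 h2 hfin γ hγ
    exact cost_integrable γ S T hS hT (by rw [hγ.1]; exact h1) (by rw [hγ.2]; exact h2)
      (by rw [hγ.1]; exact hfin)
  -- cost additivity
  have hcost_add : ∀ γ₁ ∈ Couplings μh νh, ∀ γ₂ ∈ Couplings μt νt,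
      γ₁ + γ₂ ∈ Couplings μ ν ∧ cost (γ₁ + γ₂) = cost γ₁ + cost γ₂ := by
    intro γ₁ hγ₁ γ₂ hγ₂
    constructor
    · constructor
      · rw [Measure.map_add _ _ measurable_fst, hγ₁.1, hγ₂.1, hμadd]
      · rw [Measure.map_add _ _ measurable_snd, hγ₁.2, hγ₂.2, hνadd]
    · exact integral_add_measure (key μh νh hμhS hνhT hμhuniv γ₁ hγ₁)
        (key μt νt hμtS hνtT hμtuniv γ₂ hγ₂)
  -- W2sq μ ν = cost π
  have hW : W2sq μ ν = cost π := by
    refine le_antisymm (csInf_le ⟨0, ?_⟩ ⟨π, ⟨hπf, hπs⟩, rfl⟩) (le_csInf ⟨cost π, π, ⟨hπf, hπs⟩, rfl⟩ ?_)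
    · rintro _ ⟨γ, _, rfl⟩; exact cost_nonneg γ
    · rintro _ ⟨γ, hγ, rfl⟩; exact hopt γ hγ
  have hcπ : cost π = cost πh + cost πt := by
    have h1 := key μh νh hμhS hνhT hμhuniv πh hπhC
    have h2 := key μt νt hμtS hνtT hμtuniv πt hπtC
    rw [show cost π = cost (πh + πt) by rw [hsplit]]
    exact integral_add_measure h1 h2
  -- sInf bookkeeping
  have hAne : (cost '' Couplings μh νh).Nonempty := ⟨cost πh, πh, hπhC, rfl⟩
  have hBne : (cost '' Couplings μt νt).Nonempty := ⟨cost πt, πt, hπtC, rfl⟩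
  have hAbdd : BddBelow (cost '' Couplings μh νh) := ⟨0, by rintro _ ⟨γ, _, rfl⟩; exact cost_nonneg γ⟩
  have hBbdd : BddBelow (cost '' Couplings μt νt) := ⟨0, by rintro _ ⟨γ, _, rfl⟩; exact cost_nonneg γ⟩
  have hle : W2sq μh νh + W2sq μt νt ≤ cost π := by
    rw [hcπ]
    exact add_le_add (csInf_le hAbdd ⟨πh, hπhC, rfl⟩) (csInf_le hBbdd ⟨πt, hπtC, rfl⟩)
  have hge : cost π ≤ W2sq μh νh + W2sq μt νt := by
    have h1 : ∀ b ∈ cost '' Couplings μt νt, cost π ≤ W2sq μh νh + b := by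
      rintro _ ⟨γ₂, hγ₂, rfl⟩
      have h2 : cost π - cost γ₂ ≤ W2sq μh νh := by
        refine le_csInf hAne ?_
        rintro _ ⟨γ₁, hγ₁, rfl⟩
        obtain ⟨hmem, heq⟩ := hcost_add γ₁ hγ₁ γ₂ hγ₂
        have := hopt _ hmem
        rw [heq] at this
        linarith
      linarith
    have h2 : cost π - W2sq μh νh ≤ W2sq μt νt := by
      refine le_csInf hBne ?_
      intro b hb
      have := h1 b hb
      linarith
    linarith
  rw [hW]
  exact le_antisymm hge hle
end
end

section
/- Let μ = ∑_{i=1}^m αᵢδ(xᵢ) and ν = ∑_{j=1}^n βⱼδ(yⱼ) be discrete probability measures on ℝ^d with distinct atoms, and suppose some optimal quadratic-cost transport plan between μ and ν is not induced by a bijection of atoms (i.e., some atom of μ sends mass to two distinct atoms of ν). Then there exist c₀ > 0 and C > 0 such that for all σ ∈ (0, c₀): W₂²(μ, ν) − W₂²(μ * N_σ, ν * N_σ) ≥ C σ. -/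
open MeasureTheory ProbabilityTheory Metric
open scoped ENNReal NNReal

noncomputable section

namespace Stmt18Helpers

open MeasureTheory

lemma cost_nonneg {d : ℕ} (π : Measure (Ed d × Ed d)) : 0 ≤ cost π :=
  integral_nonneg fun p => by positivity

lemma bddBelow_cost {d : ℕ} (μ ν : Measure (Ed d)) : BddBelow (cost '' Couplings μ ν) :=
  ⟨0, fun c hc => by obtain ⟨γ, -, rfl⟩ := hc; exact cost_nonneg γ⟩

lemma W2sq_le_cost {d : ℕ} {μ ν : Measure (Ed d)} {γ : Measure (Ed d × Ed d)}
    (hγ : γ ∈ Couplings μ ν) : W2sq μ ν ≤ cost γ :=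
  csInf_le (bddBelow_cost μ ν) ⟨γ, hγ, rfl⟩

lemma W2sq_eq_cost {d : ℕ} {μ ν : Measure (Ed d)} {π : Measure (Ed d × Ed d)}
    (hπ : π ∈ Couplings μ ν) (hopt : ∀ γ ∈ Couplings μ ν, cost π ≤ cost γ) :
    W2sq μ ν = cost π :=
  le_antisymm (W2sq_le_cost hπ)
    (le_csInf ⟨cost π, π, hπ, rfl⟩ (fun b hb => by obtain ⟨γ, hγ, rfl⟩ := hb; exact hopt γ hγ))

lemma map_piecewise {X Y : Type*} [MeasurableSpace X] [MeasurableSpace Y]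
    (μ : Measure X) {s : Set X} [DecidablePred (· ∈ s)] (hs : MeasurableSet s)
    {f g : X → Y} (hf : Measurable f) (hg : Measurable g) :
    μ.map (s.piecewise f g) = (μ.restrict s).map f + (μ.restrict sᶜ).map g := by
  ext t ht
  rw [Measure.map_apply (hf.piecewise hs hg) ht, Measure.add_apply,
    Measure.map_apply hf ht, Measure.map_apply hg ht,
    Measure.restrict_apply (hf ht), Measure.restrict_apply (hg ht),
    Set.piecewise_preimage, Set.ite, Set.diff_eq]
  exact measure_union (Set.disjoint_of_subset Set.inter_subset_right Set.inter_subset_right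
    disjoint_compl_right) ((hg ht).inter hs.compl)

lemma restrict_map_invol {X : Type*} [MeasurableSpace X] {μ : Measure X} {e : X → X}
    (he : Measurable e) (hμ : μ.map e = μ) {s : Set X} (hs : MeasurableSet s) :
    (μ.restrict (e ⁻¹' s)).map e = μ.restrict s := by
  ext t ht
  rw [Measure.map_apply he ht, Measure.restrict_apply (he ht), Measure.restrict_apply ht,
    ← Set.preimage_inter, ← Measure.map_apply he (ht.inter hs), hμ]

lemma gaussianReal_map_neg (v : NNReal) :
    (ProbabilityTheory.gaussianReal 0 v).map Neg.neg = ProbabilityTheory.gaussianReal 0 v := by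
  have h := ProbabilityTheory.gaussianReal_map_const_mul (μ := 0) (v := v) (-1)
  have e1 : (fun x : ℝ => (-1 : ℝ) * x) = Neg.neg := by funext t; simp
  have e2 : (NNReal.mk ((-1 : ℝ) ^ 2) (sq_nonneg _)) = 1 := by
    ext; show ((-1:ℝ))^2 = ((1:ℝ≥0):ℝ); norm_num
  rw [e1, e2, one_mul, mul_zero] at h
  exact h

instance gauss_prob (d : ℕ) (σ : ℝ) : IsProbabilityMeasure (gauss d σ) := by
  unfold gauss
  exact Measure.isProbabilityMeasure_map
    ((EuclideanSpace.equiv (Fin d) ℝ).symm.continuous.measurable.aemeasurable)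

lemma es_meas (d : ℕ) : Measurable (⇑(EuclideanSpace.equiv (Fin d) ℝ).symm) :=
  (EuclideanSpace.equiv (Fin d) ℝ).symm.continuous.measurable

lemma eqv_meas (d : ℕ) : Measurable (⇑(EuclideanSpace.equiv (Fin d) ℝ)) :=
  (EuclideanSpace.equiv (Fin d) ℝ).continuous.measurable

lemma gauss_map_neg (d : ℕ) (σ : ℝ) :
    (gauss d σ).map (Neg.neg : Ed d → Ed d) = gauss d σ := by
  set m := ProbabilityTheory.gaussianReal 0 (Real.toNNReal (σ ^ 2)) with hm
  have hmp : MeasurePreserving (fun (a : Fin d → ℝ) i => -(a i))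
      (Measure.pi fun _ => m) (Measure.pi fun _ => m) :=
    measurePreserving_pi _ _ (fun _ => ⟨measurable_neg, gaussianReal_map_neg _⟩)
  unfold gauss
  rw [Measure.map_map continuous_neg.measurable (es_meas d)]
  have hcomm : (Neg.neg : Ed d → Ed d) ∘ (⇑(EuclideanSpace.equiv (Fin d) ℝ).symm)
      = (⇑(EuclideanSpace.equiv (Fin d) ℝ).symm) ∘ (fun (a : Fin d → ℝ) i => -(a i)) := by
    funext a
    show -((EuclideanSpace.equiv (Fin d) ℝ).symm a) = (EuclideanSpace.equiv (Fin d) ℝ).symm (-a)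
    rw [map_neg]
  rw [hcomm, ← Measure.map_map (es_meas d) hmp.measurable, hmp.map_eq]

lemma smul_prod' {X Y : Type*} [MeasurableSpace X] [MeasurableSpace Y]
    (c : ENNReal) (a : Measure X) (κ : Measure Y) [SFinite κ] :
    (c • a).prod κ = c • (a.prod κ) := by
  ext s hs
  rw [Measure.prod_apply hs, lintegral_smul_measure, Measure.smul_apply,
    Measure.prod_apply hs, smul_eq_mul]

lemma mconv_add_left {d : ℕ} (a b κ : Measure (Ed d)) [SFinite a] [SFinite b] [SFinite κ] :
    mconv (a + b) κ = mconv a κ + mconv b κ := by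
  unfold mconv
  rw [Measure.add_prod, Measure.map_add _ _ (by fun_prop)]

lemma mconv_smul_left {d : ℕ} (c : ENNReal) (a κ : Measure (Ed d)) [SFinite κ] :
    mconv (c • a) κ = c • mconv a κ := by
  unfold mconv
  rw [smul_prod', Measure.map_smul]

lemma mconv_dirac_left {d : ℕ} (a : Ed d) (κ : Measure (Ed d)) [SFinite κ] :
    mconv (Measure.dirac a) κ = κ.map (fun z => a + z) := by
  unfold mconv
  rw [Measure.dirac_prod, Measure.map_map (by fun_prop) (by fun_prop)]
  rfl

lemma measurable_cadd {d : ℕ} (c : Ed d) : Measurable fun z : Ed d => c + z :=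
  (continuous_const.add continuous_id).measurable

lemma measurable_csub {d : ℕ} (c : Ed d) : Measurable fun z : Ed d => c - z :=
  (continuous_const.sub continuous_id).measurable

end Stmt18Helpers

set_option maxHeartbeats 2000000 in
lemma key {d : ℕ} (x₀ y₁ y₂ : Ed d) (hyy : y₁ ≠ y₂)
    (π' : Measure (Ed d × Ed d)) [IsFiniteMeasure π']
    (hint : Integrable (fun p : Ed d × Ed d => ‖p.1 - p.2‖ ^ 2) π')
    (lam : ℝ≥0∞) (hlam : lam ≠ ⊤) (σ : ℝ) (hσ : 0 < σ)
    (hσ' : σ * (16 * d) ≤ ∑ i, |(y₁ - y₂) i|) :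
    ∃ γ : Measure (Ed d × Ed d),
      γ.map Prod.fst
        = mconv ((π'.map Prod.fst) + lam • Measure.dirac x₀ + lam • Measure.dirac x₀)
            (gauss d σ) ∧
      γ.map Prod.snd
        = mconv ((π'.map Prod.snd) + lam • Measure.dirac y₁ + lam • Measure.dirac y₂)
            (gauss d σ) ∧
      cost γ ≤ cost π' + lam.toReal * (‖x₀ - y₁‖ ^ 2 + ‖x₀ - y₂‖ ^ 2)
        - lam.toReal * (2 * (∑ i, |(y₁ - y₂) i|) *
            ((ProbabilityTheory.gaussianReal 0 1 (Set.Icc 1 2)).toReal) ^ d) * σ := by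
  classical
  set κ := gauss d σ with hκdef
  haveI : IsProbabilityMeasure κ := Stmt18Helpers.gauss_prob d σ
  set v : Ed d := y₁ - y₂ with hvdef
  set S : ℝ := ∑ i, |v i| with hSdef
  have hS : 0 ≤ S := Finset.sum_nonneg fun i _ => abs_nonneg _
  set p0 : ℝ≥0∞ := ProbabilityTheory.gaussianReal 0 1 (Set.Icc 1 2) with hp0def
  -- the region B
  set J : Fin d → Set ℝ := fun i =>
    if 0 ≤ v i then Set.Icc (-(2 * σ)) (-σ) else Set.Icc σ (2 * σ) with hJdef
  set B : Set (Ed d) := (⇑(EuclideanSpace.equiv (Fin d) ℝ)) ⁻¹' (Set.univ.pi J) with hBdef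
  have hJmeas : ∀ i, MeasurableSet (J i) := by
    intro i
    rw [hJdef]
    dsimp only
    split_ifs <;> exact measurableSet_Icc
  have hBmeas : MeasurableSet B :=
    Stmt18Helpers.eqv_meas d (MeasurableSet.univ_pi hJmeas)
  have hmemB : ∀ z : Ed d, z ∈ B ↔ ∀ i, z i ∈ J i := by
    intro z
    simp only [hBdef, Set.mem_preimage, Set.mem_univ_pi]
    exact Iff.rfl
  -- coordinates on B
  have hcoord : ∀ z ∈ B, ∀ i, |z i| ≤ 2 * σ := by
    intro z hz i
    have hzi := (hmemB z).1 hz i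
    by_cases h : 0 ≤ v i
    · rw [hJdef] at hzi; simp only [if_pos h, Set.mem_Icc] at hzi
      rw [abs_le]; constructor <;> nlinarith [hzi.1, hzi.2]
    · rw [hJdef] at hzi; simp only [if_neg h, Set.mem_Icc] at hzi
      rw [abs_le]; constructor <;> nlinarith [hzi.1, hzi.2]
  have hinner : ∀ z ∈ B, (inner ℝ v z : ℝ) ≤ -(σ * S) := by
    intro z hz
    have h1 : (inner ℝ v z : ℝ) = ∑ i, v i * z i := by
      simp [PiLp.inner_apply, RCLike.inner_apply, mul_comm]
    rw [h1, hSdef]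
    have h2 : ∀ i ∈ Finset.univ, v i * z i ≤ -(σ * |v i|) := by
      intro i _
      have hzi := (hmemB z).1 hz i
      by_cases h : 0 ≤ v i
      · rw [hJdef] at hzi; simp only [if_pos h, Set.mem_Icc] at hzi
        rw [abs_of_nonneg h]; nlinarith [hzi.2]
      · push_neg at h
        rw [hJdef] at hzi; simp only [if_neg (not_le.mpr h), Set.mem_Icc] at hzi
        rw [abs_of_neg h]; nlinarith [hzi.1]
    calc ∑ i, v i * z i ≤ ∑ i, -(σ * |v i|) := Finset.sum_le_sum h2
      _ = -(σ * ∑ i, |v i|) := by rw [Finset.mul_sum, ← Finset.sum_neg_distrib]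
  have hznorm : ∀ z ∈ B, ‖z‖ ≤ 2 * σ * Real.sqrt d := by
    intro z hz
    rw [EuclideanSpace.norm_eq]
    have h1 : ∑ i, ‖z i‖ ^ 2 ≤ (d : ℝ) * (2 * σ) ^ 2 := by
      calc ∑ i, ‖z i‖ ^ 2 ≤ ∑ _i : Fin d, (2 * σ) ^ 2 := by
            refine Finset.sum_le_sum fun i _ => ?_
            have := hcoord z hz i
            rw [Real.norm_eq_abs]
            nlinarith [abs_nonneg (z i)]
        _ = (d : ℝ) * (2 * σ) ^ 2 := by
            rw [Finset.sum_const, Finset.card_univ, Fintype.card_fin, nsmul_eq_mul]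
    calc Real.sqrt (∑ i, ‖z i‖ ^ 2) ≤ Real.sqrt ((d : ℝ) * (2 * σ) ^ 2) :=
          Real.sqrt_le_sqrt h1
      _ = 2 * σ * Real.sqrt d := by
          rw [Real.sqrt_mul (Nat.cast_nonneg d), Real.sqrt_sq (by positivity)]
          ring
  -- Gaussian measure of B
  have hmapσ : (ProbabilityTheory.gaussianReal 0 1).map (fun t => σ * t)
      = ProbabilityTheory.gaussianReal 0 (Real.toNNReal (σ ^ 2)) := by
    have h := ProbabilityTheory.gaussianReal_map_const_mul (μ := 0) (v := 1) σ
    have e2 : (NNReal.mk (σ ^ 2) (sq_nonneg _)) * 1 = Real.toNNReal (σ ^ 2) := by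
      ext
      show σ ^ 2 * 1 = ((σ ^ 2).toNNReal : ℝ)
      simp [Real.coe_toNNReal _ (sq_nonneg σ)]
    rw [e2, mul_zero] at h
    exact h
  have hmapnσ : (ProbabilityTheory.gaussianReal 0 1).map (fun t => (-σ) * t)
      = ProbabilityTheory.gaussianReal 0 (Real.toNNReal (σ ^ 2)) := by
    have h := ProbabilityTheory.gaussianReal_map_const_mul (μ := 0) (v := 1) (-σ)
    have e2 : (NNReal.mk ((-σ) ^ 2) (sq_nonneg _)) * 1 = Real.toNNReal (σ ^ 2) := by
      ext
      show (-σ) ^ 2 * 1 = ((σ ^ 2).toNNReal : ℝ)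
      simp [Real.coe_toNNReal _ (sq_nonneg σ), neg_sq]
    rw [e2, mul_zero] at h
    exact h
  have hfac : ∀ i, (ProbabilityTheory.gaussianReal 0 (Real.toNNReal (σ ^ 2))) (J i) = p0 := by
    intro i
    rw [hJdef]
    by_cases h : 0 ≤ v i
    · simp only [if_pos h]
      rw [← hmapnσ, Measure.map_apply (measurable_const_mul (-σ)) measurableSet_Icc]
      have hpre : (fun t => (-σ) * t) ⁻¹' Set.Icc (-(2 * σ)) (-σ) = Set.Icc 1 2 := by
        ext t
        simp only [Set.mem_preimage, Set.mem_Icc]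
        constructor
        · rintro ⟨ha, hb⟩; constructor <;> nlinarith
        · rintro ⟨ha, hb⟩; constructor <;> nlinarith
      rw [hpre, hp0def]
    · simp only [if_neg h]
      rw [← hmapσ, Measure.map_apply (measurable_const_mul σ) measurableSet_Icc]
      have hpre : (fun t => σ * t) ⁻¹' Set.Icc σ (2 * σ) = Set.Icc 1 2 := by
        ext t
        simp only [Set.mem_preimage, Set.mem_Icc]
        constructor
        · rintro ⟨ha, hb⟩; constructor <;> nlinarith
        · rintro ⟨ha, hb⟩; constructor <;> nlinarith
      rw [hpre, hp0def]
  have hκB : κ B = p0 ^ d := by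
    have hpre : (⇑(EuclideanSpace.equiv (Fin d) ℝ).symm) ⁻¹' B = Set.univ.pi J := by
      ext a
      simp only [hBdef, Set.mem_preimage]
      rw [ContinuousLinearEquiv.apply_symm_apply]
    rw [hκdef]
    show (Measure.pi fun _ : Fin d =>
        ProbabilityTheory.gaussianReal 0 (Real.toNNReal (σ ^ 2))).map
        (⇑(EuclideanSpace.equiv (Fin d) ℝ).symm) B = p0 ^ d
    rw [Measure.map_apply (Stmt18Helpers.es_meas d) hBmeas, hpre, Measure.pi_pi]
    rw [Finset.prod_congr rfl (fun i _ => hfac i), Finset.prod_const, Finset.card_univ,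
      Fintype.card_fin]
  have hp0top : p0 ≠ ⊤ := measure_ne_top _ _
  -- maps
  set B₂ : Set (Ed d) := (Neg.neg : Ed d → Ed d) ⁻¹' B with hB₂def
  have hnegmeas : Measurable (Neg.neg : Ed d → Ed d) := continuous_neg.measurable
  have hB₂meas : MeasurableSet B₂ := hnegmeas hBmeas
  set b₁ : Ed d := x₀ - y₁ with hb₁def
  set b₂ : Ed d := x₀ - y₂ with hb₂def
  set T₁ : Ed d → Ed d := B.piecewise (fun z => y₂ - z) (fun z => y₁ + z) with hT₁def
  set T₂ : Ed d → Ed d := B₂.piecewise (fun z => y₁ - z) (fun z => y₂ + z) with hT₂def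
  set ψ₁ : Ed d → Ed d × Ed d := fun z => (x₀ + z, T₁ z) with hψ₁def
  set ψ₂ : Ed d → Ed d × Ed d := fun z => (x₀ + z, T₂ z) with hψ₂def
  set Φ : (Ed d × Ed d) × Ed d → Ed d × Ed d := fun q => (q.1.1 + q.2, q.1.2 + q.2) with hΦdef
  have hT₁m : Measurable T₁ :=
    Measurable.piecewise hBmeas (continuous_const.sub continuous_id).measurable
      (continuous_const.add continuous_id).measurable
  have hT₂m : Measurable T₂ :=
    Measurable.piecewise hB₂meas (continuous_const.sub continuous_id).measurable
      (continuous_const.add continuous_id).measurable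
  have hψ₁m : Measurable ψ₁ :=
    Measurable.prodMk (continuous_const.add continuous_id).measurable hT₁m
  have hψ₂m : Measurable ψ₂ :=
    Measurable.prodMk (continuous_const.add continuous_id).measurable hT₂m
  have hΦm : Measurable Φ :=
    (((continuous_fst.comp continuous_fst).add continuous_snd).prodMk
      ((continuous_snd.comp continuous_fst).add continuous_snd)).measurable
  have haddm : Measurable (fun p : Ed d × Ed d => p.1 + p.2) :=
    (continuous_fst.add continuous_snd).measurable
  haveI hfin1 : IsFiniteMeasure (lam • Measure.dirac x₀) := by
    constructor
    rw [Measure.smul_apply, measure_univ, smul_eq_mul, mul_one]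
    exact hlam.lt_top
  haveI hfin2 : IsFiniteMeasure (lam • Measure.dirac y₁) := by
    constructor
    rw [Measure.smul_apply, measure_univ, smul_eq_mul, mul_one]
    exact hlam.lt_top
  haveI hfin3 : IsFiniteMeasure (lam • Measure.dirac y₂) := by
    constructor
    rw [Measure.smul_apply, measure_univ, smul_eq_mul, mul_one]
    exact hlam.lt_top
  have hnegmap : κ.map (Neg.neg : Ed d → Ed d) = κ := Stmt18Helpers.gauss_map_neg d σ
  have hres1 : (κ.restrict B₂).map (Neg.neg : Ed d → Ed d) = κ.restrict B :=
    Stmt18Helpers.restrict_map_invol hnegmeas hnegmap hBmeas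
  have hres2 : (κ.restrict B).map (Neg.neg : Ed d → Ed d) = κ.restrict B₂ := by
    have hBB : (Neg.neg : Ed d → Ed d) ⁻¹' B₂ = B := by
      ext z
      simp only [hB₂def, Set.mem_preimage, neg_neg]
    calc (κ.restrict B).map (Neg.neg : Ed d → Ed d)
        = (κ.restrict ((Neg.neg : Ed d → Ed d) ⁻¹' B₂)).map (Neg.neg : Ed d → Ed d) := by
          rw [hBB]
      _ = κ.restrict B₂ := Stmt18Helpers.restrict_map_invol hnegmeas hnegmap hB₂meas
  set γ : Measure (Ed d × Ed d) :=
    (π'.prod κ).map Φ + lam • ((κ.map ψ₁) + (κ.map ψ₂)) with hγdef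
  refine ⟨γ, ?_, ?_, ?_⟩
  -- first marginal
  · have hfstΦ : ((π'.prod κ).map Φ).map Prod.fst = mconv (π'.map Prod.fst) κ := by
      rw [Measure.map_map measurable_fst hΦm]
      have he : (Prod.fst ∘ Φ) = (fun p : Ed d × Ed d => p.1 + p.2) ∘
          (Prod.map Prod.fst (id : Ed d → Ed d)) := rfl
      rw [he, ← Measure.map_map haddm (measurable_fst.prodMap measurable_id),
        ← Measure.map_prod_map _ _ measurable_fst measurable_id, Measure.map_id]
      rfl
    have hfstψ₁ : (κ.map ψ₁).map Prod.fst = κ.map (fun z => x₀ + z) := by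
      rw [Measure.map_map measurable_fst hψ₁m]; rfl
    have hfstψ₂ : (κ.map ψ₂).map Prod.fst = κ.map (fun z => x₀ + z) := by
      rw [Measure.map_map measurable_fst hψ₂m]; rfl
    rw [hγdef, Measure.map_add _ _ measurable_fst]
    rw [Measure.map_smul]
    rw [Measure.map_add _ _ measurable_fst]
    rw [hfstΦ, hfstψ₁, hfstψ₂]
    rw [Stmt18Helpers.mconv_add_left]
    rw [Stmt18Helpers.mconv_add_left]
    rw [Stmt18Helpers.mconv_smul_left]
    rw [Stmt18Helpers.mconv_dirac_left]
    rw [smul_add, ← add_assoc]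
  -- second marginal
  · have hsndΦ : ((π'.prod κ).map Φ).map Prod.snd = mconv (π'.map Prod.snd) κ := by
      rw [Measure.map_map measurable_snd hΦm]
      have he : (Prod.snd ∘ Φ) = (fun p : Ed d × Ed d => p.1 + p.2) ∘
          (Prod.map Prod.snd (id : Ed d → Ed d)) := rfl
      rw [he, ← Measure.map_map haddm (measurable_snd.prodMap measurable_id),
        ← Measure.map_prod_map _ _ measurable_snd measurable_id, Measure.map_id]
      rfl
    have hsndψ₁ : (κ.map ψ₁).map Prod.snd = κ.map T₁ := by
      rw [Measure.map_map measurable_snd hψ₁m]; rfl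
    have hsndψ₂ : (κ.map ψ₂).map Prod.snd = κ.map T₂ := by
      rw [Measure.map_map measurable_snd hψ₂m]; rfl
    have hmapT₁ : κ.map T₁ = (κ.restrict B).map (fun z => y₂ - z)
        + (κ.restrict Bᶜ).map (fun z => y₁ + z) :=
      Stmt18Helpers.map_piecewise κ hBmeas (continuous_const.sub continuous_id).measurable
        (continuous_const.add continuous_id).measurable
    have hmapT₂ : κ.map T₂ = (κ.restrict B₂).map (fun z => y₁ - z)
        + (κ.restrict B₂ᶜ).map (fun z => y₂ + z) :=
      Stmt18Helpers.map_piecewise κ hB₂meas (continuous_const.sub continuous_id).measurable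
        (continuous_const.add continuous_id).measurable
    have hy1 : (κ.restrict B₂).map (fun z => y₁ - z) = (κ.restrict B).map (fun z => y₁ + z) := by
      have he : (fun z : Ed d => y₁ - z) = (fun z : Ed d => y₁ + z) ∘ (Neg.neg : Ed d → Ed d) := by
        funext z
        simp [sub_eq_add_neg]
      rw [he, ← Measure.map_map (Stmt18Helpers.measurable_cadd y₁) hnegmeas, hres1]
    have hy2 : (κ.restrict B).map (fun z => y₂ - z) = (κ.restrict B₂).map (fun z => y₂ + z) := by
      have he : (fun z : Ed d => y₂ - z) = (fun z : Ed d => y₂ + z) ∘ (Neg.neg : Ed d → Ed d) := by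
        funext z
        simp [sub_eq_add_neg]
      rw [he, ← Measure.map_map (Stmt18Helpers.measurable_cadd y₂) hnegmeas, hres2]
    have hsum1 : (κ.restrict B).map (fun z => y₁ + z) + (κ.restrict Bᶜ).map (fun z => y₁ + z)
        = κ.map (fun z => y₁ + z) := by
      rw [← Measure.map_add _ _ (Stmt18Helpers.measurable_cadd y₁),
        Measure.restrict_add_restrict_compl hBmeas]
    have hsum2 : (κ.restrict B₂).map (fun z => y₂ + z) + (κ.restrict B₂ᶜ).map (fun z => y₂ + z)
        = κ.map (fun z => y₂ + z) := by
      rw [← Measure.map_add _ _ (Stmt18Helpers.measurable_cadd y₂),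
        Measure.restrict_add_restrict_compl hB₂meas]
    have hinner2 : κ.map T₁ + κ.map T₂ = κ.map (fun z => y₁ + z) + κ.map (fun z => y₂ + z) := by
      rw [hmapT₁, hmapT₂, hy1, hy2, ← hsum1, ← hsum2]
      abel
    rw [hγdef, Measure.map_add _ _ measurable_snd, Measure.map_smul,
      Measure.map_add _ _ measurable_snd, hsndΦ, hsndψ₁, hsndψ₂, hinner2,
      Stmt18Helpers.mconv_add_left, Stmt18Helpers.mconv_add_left,
      Stmt18Helpers.mconv_smul_left, Stmt18Helpers.mconv_smul_left,
      Stmt18Helpers.mconv_dirac_left, Stmt18Helpers.mconv_dirac_left, smul_add, add_assoc]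
  -- cost estimate
  · have hfcont : Continuous (fun p : Ed d × Ed d => ‖p.1 - p.2‖ ^ 2) :=
      (continuous_fst.sub continuous_snd).norm.pow 2
    set f : Ed d × Ed d → ℝ := fun p => ‖p.1 - p.2‖ ^ 2 with hfdef
    have hsqd : (0:ℝ) ≤ 2 * σ * Real.sqrt d := by positivity
    have hB₂norm : ∀ z ∈ B₂, ‖z‖ ≤ 2 * σ * Real.sqrt d := by
      intro z hz
      rw [← norm_neg]
      exact hznorm (-z) hz
    -- pointwise descriptions
    have he₁ : (fun z => f (ψ₁ z))
        = B.piecewise (fun z => ‖b₂ + (z + z)‖ ^ 2) (fun _ => ‖b₁‖ ^ 2) := by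
      funext z
      by_cases hz : z ∈ B
      · rw [Set.piecewise_eq_of_mem _ _ _ hz]
        show ‖x₀ + z - T₁ z‖ ^ 2 = _
        rw [hT₁def, Set.piecewise_eq_of_mem _ _ _ hz]
        have h : x₀ + z - (y₂ - z) = b₂ + (z + z) := by rw [hb₂def]; abel
        rw [h]
      · rw [Set.piecewise_eq_of_notMem _ _ _ hz]
        show ‖x₀ + z - T₁ z‖ ^ 2 = _
        rw [hT₁def, Set.piecewise_eq_of_notMem _ _ _ hz]
        have h : x₀ + z - (y₁ + z) = b₁ := by rw [hb₁def]; abel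
        rw [h]
    have he₂ : (fun z => f (ψ₂ z))
        = B₂.piecewise (fun z => ‖b₁ + (z + z)‖ ^ 2) (fun _ => ‖b₂‖ ^ 2) := by
      funext z
      by_cases hz : z ∈ B₂
      · rw [Set.piecewise_eq_of_mem _ _ _ hz]
        show ‖x₀ + z - T₂ z‖ ^ 2 = _
        rw [hT₂def, Set.piecewise_eq_of_mem _ _ _ hz]
        have h : x₀ + z - (y₁ - z) = b₁ + (z + z) := by rw [hb₁def]; abel
        rw [h]
      · rw [Set.piecewise_eq_of_notMem _ _ _ hz]
        show ‖x₀ + z - T₂ z‖ ^ 2 = _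
        rw [hT₂def, Set.piecewise_eq_of_notMem _ _ _ hz]
        have h : x₀ + z - (y₂ + z) = b₂ := by rw [hb₂def]; abel
        rw [h]
    set R : ℝ := (‖b₁‖ + (2 * σ * Real.sqrt d + 2 * σ * Real.sqrt d)) ^ 2
      + (‖b₂‖ + (2 * σ * Real.sqrt d + 2 * σ * Real.sqrt d)) ^ 2 with hRdef
    have hkey_bound : ∀ (c : Ed d) (z : Ed d), ‖z‖ ≤ 2 * σ * Real.sqrt d →
        ‖c + (z + z)‖ ^ 2 ≤ (‖c‖ + (2 * σ * Real.sqrt d + 2 * σ * Real.sqrt d)) ^ 2 := by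
      intro c z hzn
      refine pow_le_pow_left₀ (norm_nonneg _) ?_ 2
      calc ‖c + (z + z)‖ ≤ ‖c‖ + ‖z + z‖ := norm_add_le _ _
        _ ≤ ‖c‖ + (‖z‖ + ‖z‖) := by linarith [norm_add_le z z]
        _ ≤ _ := by linarith
    have hbound1 : ∀ z, ‖f (ψ₁ z)‖ ≤ R := by
      intro z
      rw [Real.norm_of_nonneg (by positivity)]
      have hzeq := congrFun he₁ z
      by_cases hz : z ∈ B
      · rw [hzeq, Set.piecewise_eq_of_mem _ _ _ hz, hRdef]
        have := hkey_bound b₂ z (hznorm z hz)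
        nlinarith [sq_nonneg (‖b₁‖ + (2 * σ * Real.sqrt d + 2 * σ * Real.sqrt d))]
      · rw [hzeq, Set.piecewise_eq_of_notMem _ _ _ hz, hRdef]
        nlinarith [sq_nonneg (‖b₂‖ + (2 * σ * Real.sqrt d + 2 * σ * Real.sqrt d)),
          norm_nonneg b₁]
    have hbound2 : ∀ z, ‖f (ψ₂ z)‖ ≤ R := by
      intro z
      rw [Real.norm_of_nonneg (by positivity)]
      have hzeq := congrFun he₂ z
      by_cases hz : z ∈ B₂
      · rw [hzeq, Set.piecewise_eq_of_mem _ _ _ hz, hRdef]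
        have := hkey_bound b₁ z (hB₂norm z hz)
        nlinarith [sq_nonneg (‖b₂‖ + (2 * σ * Real.sqrt d + 2 * σ * Real.sqrt d))]
      · rw [hzeq, Set.piecewise_eq_of_notMem _ _ _ hz, hRdef]
        nlinarith [sq_nonneg (‖b₁‖ + (2 * σ * Real.sqrt d + 2 * σ * Real.sqrt d)),
          norm_nonneg b₂]
    have hIψ₁ : Integrable (fun z => f (ψ₁ z)) κ :=
      (integrable_const R).mono' (hfcont.measurable.comp hψ₁m).aestronglyMeasurable
        (ae_of_all _ hbound1)
    have hIψ₂ : Integrable (fun z => f (ψ₂ z)) κ :=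
      (integrable_const R).mono' (hfcont.measurable.comp hψ₂m).aestronglyMeasurable
        (ae_of_all _ hbound2)
    have hIm₁ : Integrable f (κ.map ψ₁) :=
      (integrable_map_measure hfcont.aestronglyMeasurable hψ₁m.aemeasurable).mpr hIψ₁
    have hIm₂ : Integrable f (κ.map ψ₂) :=
      (integrable_map_measure hfcont.aestronglyMeasurable hψ₂m.aemeasurable).mpr hIψ₂
    have hcircΦ : ∀ q : (Ed d × Ed d) × Ed d, f (Φ q) = f q.1 := by
      intro q
      show ‖q.1.1 + q.2 - (q.1.2 + q.2)‖ ^ 2 = ‖q.1.1 - q.1.2‖ ^ 2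
      rw [add_sub_add_right_eq_sub]
    have hintΦ : Integrable f ((π'.prod κ).map Φ) := by
      rw [integrable_map_measure hfcont.aestronglyMeasurable hΦm.aemeasurable]
      have he : (f ∘ Φ) = (f ∘ Prod.fst) := funext hcircΦ
      rw [he, ← integrable_map_measure hfcont.aestronglyMeasurable
        measurable_fst.aemeasurable, Measure.map_fst_prod, measure_univ, one_smul]
      exact hint
    have hcostΦ : (∫ p, f p ∂((π'.prod κ).map Φ)) = cost π' := by
      rw [integral_map hΦm.aemeasurable hfcont.aestronglyMeasurable]
      calc (∫ q, f (Φ q) ∂(π'.prod κ)) = ∫ q, f q.1 ∂(π'.prod κ) :=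
            integral_congr_ae (ae_of_all _ hcircΦ)
        _ = ∫ p, f p ∂((π'.prod κ).map Prod.fst) :=
            (integral_map measurable_fst.aemeasurable hfcont.aestronglyMeasurable).symm
        _ = cost π' := by rw [Measure.map_fst_prod, measure_univ, one_smul]; rfl
    have hcγ : cost γ = cost π'
        + lam.toReal * ((∫ z, f (ψ₁ z) ∂κ) + (∫ z, f (ψ₂ z) ∂κ)) := by
      rw [hγdef]
      show (∫ p, f p ∂((π'.prod κ).map Φ + lam • (κ.map ψ₁ + κ.map ψ₂))) = _
      rw [integral_add_measure hintΦ ((hIm₁.add_measure hIm₂).smul_measure hlam),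
        integral_smul_measure, integral_add_measure hIm₁ hIm₂,
        integral_map hψ₁m.aemeasurable hfcont.aestronglyMeasurable,
        integral_map hψ₂m.aemeasurable hfcont.aestronglyMeasurable, hcostΦ, smul_eq_mul]
    -- integrability on pieces
    have hcont1 : Continuous (fun z : Ed d => ‖b₂ + (z + z)‖ ^ 2) :=
      (continuous_const.add (continuous_id.add continuous_id)).norm.pow 2
    have hcont1' : Continuous (fun z : Ed d => ‖b₁ - (z + z)‖ ^ 2) :=
      (continuous_const.sub (continuous_id.add continuous_id)).norm.pow 2
    have hcont2 : Continuous (fun z : Ed d => ‖b₁ + (z + z)‖ ^ 2) :=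
      (continuous_const.add (continuous_id.add continuous_id)).norm.pow 2
    have hIOn1 : IntegrableOn (fun z => ‖b₂ + (z + z)‖ ^ 2) B κ := by
      refine (integrable_const ((‖b₂‖ + (2 * σ * Real.sqrt d + 2 * σ * Real.sqrt d)) ^ 2)).mono'
        hcont1.aestronglyMeasurable (ae_restrict_of_forall_mem hBmeas fun z hz => ?_)
      rw [Real.norm_of_nonneg (by positivity)]
      exact hkey_bound b₂ z (hznorm z hz)
    have hIOn1' : IntegrableOn (fun z => ‖b₁ - (z + z)‖ ^ 2) B κ := by
      refine (integrable_const ((‖b₁‖ + (2 * σ * Real.sqrt d + 2 * σ * Real.sqrt d)) ^ 2)).mono'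
        hcont1'.aestronglyMeasurable (ae_restrict_of_forall_mem hBmeas fun z hz => ?_)
      rw [Real.norm_of_nonneg (by positivity)]
      have h : b₁ - (z + z) = b₁ + (-z + -z) := by abel
      rw [h]
      have hzn : ‖-z‖ ≤ 2 * σ * Real.sqrt d := by rw [norm_neg]; exact hznorm z hz
      exact hkey_bound b₁ (-z) hzn
    have hIOn2 : IntegrableOn (fun z => ‖b₁ + (z + z)‖ ^ 2) B₂ κ := by
      refine (integrable_const ((‖b₁‖ + (2 * σ * Real.sqrt d + 2 * σ * Real.sqrt d)) ^ 2)).mono'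
        hcont2.aestronglyMeasurable (ae_restrict_of_forall_mem hB₂meas fun z hz => ?_)
      rw [Real.norm_of_nonneg (by positivity)]
      exact hkey_bound b₁ z (hB₂norm z hz)
    have hI₁ : (∫ z, f (ψ₁ z) ∂κ)
        = (∫ z in B, ‖b₂ + (z + z)‖ ^ 2 ∂κ) + (κ Bᶜ).toReal * ‖b₁‖ ^ 2 := by
      rw [he₁, integral_piecewise hBmeas hIOn1
        (integrableOn_const (measure_ne_top _ _)), setIntegral_const, measureReal_def, smul_eq_mul]
    have htrans : (∫ z in B₂, ‖b₁ + (z + z)‖ ^ 2 ∂κ) = ∫ z in B, ‖b₁ - (z + z)‖ ^ 2 ∂κ := by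
      rw [show κ.restrict B₂ = (κ.restrict B).map (Neg.neg : Ed d → Ed d) from hres2.symm,
        integral_map hnegmeas.aemeasurable hcont2.aestronglyMeasurable]
      refine integral_congr_ae (ae_of_all _ fun z => ?_)
      show ‖b₁ + (-z + -z)‖ ^ 2 = ‖b₁ - (z + z)‖ ^ 2
      have h : b₁ + (-z + -z) = b₁ - (z + z) := by abel
      rw [h]
    have hI₂ : (∫ z, f (ψ₂ z) ∂κ)
        = (∫ z in B, ‖b₁ - (z + z)‖ ^ 2 ∂κ) + (κ B₂ᶜ).toReal * ‖b₂‖ ^ 2 := by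
      rw [he₂, integral_piecewise hB₂meas hIOn2
        (integrableOn_const (measure_ne_top _ _)), setIntegral_const, measureReal_def, smul_eq_mul,
        htrans]
    -- pointwise estimate on B
    have hpt : ∀ z ∈ B, ‖b₂ + (z + z)‖ ^ 2 + ‖b₁ - (z + z)‖ ^ 2
        ≤ ‖b₁‖ ^ 2 + ‖b₂‖ ^ 2 - 2 * σ * S := by
      intro z hz
      have h1 := hinner z hz
      have h2 := hznorm z hz
      have e1 : ‖b₂ + (z + z)‖ ^ 2
          = ‖b₂‖ ^ 2 + 2 * inner ℝ b₂ (z + z) + ‖z + z‖ ^ 2 := norm_add_sq_real _ _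
      have e2 : ‖b₁ - (z + z)‖ ^ 2
          = ‖b₁‖ ^ 2 - 2 * inner ℝ b₁ (z + z) + ‖z + z‖ ^ 2 := norm_sub_sq_real _ _
      have e3 : (inner ℝ b₂ (z + z) : ℝ) - inner ℝ b₁ (z + z) = inner ℝ v z + inner ℝ v z := by
        rw [← inner_sub_left]
        have hbv : b₂ - b₁ = v := by rw [hb₁def, hb₂def, hvdef]; abel
        rw [hbv, inner_add_right]
      have e4 : ‖z + z‖ ^ 2 ≤ (2 * (2 * σ * Real.sqrt d)) ^ 2 := by
        refine pow_le_pow_left₀ (norm_nonneg _) ?_ 2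
        calc ‖z + z‖ ≤ ‖z‖ + ‖z‖ := norm_add_le _ _
          _ ≤ _ := by linarith
      have e5 : Real.sqrt d ^ 2 = (d : ℝ) := Real.sq_sqrt (Nat.cast_nonneg d)
      have e6 : (2 * (2 * σ * Real.sqrt d)) ^ 2 = 16 * σ ^ 2 * d := by
        rw [mul_pow, mul_pow, mul_pow, e5]; ring
      have e7 : σ * (σ * (16 * d)) ≤ σ * S := by
        exact mul_le_mul_of_nonneg_left hσ' (le_of_lt hσ)
      linarith [e1, e2, e3, h1, e4, e6, e7]
    have hIsum : (∫ z in B, ‖b₂ + (z + z)‖ ^ 2 ∂κ) + (∫ z in B, ‖b₁ - (z + z)‖ ^ 2 ∂κ)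
        ≤ (‖b₁‖ ^ 2 + ‖b₂‖ ^ 2 - 2 * σ * S) * (κ B).toReal := by
      have hconstInt : IntegrableOn (fun _ : Ed d => ‖b₁‖ ^ 2 + ‖b₂‖ ^ 2 - 2 * σ * S) B κ :=
        integrableOn_const (measure_ne_top κ B)
      have hIsum1 : (∫ z in B, (‖b₂ + (z + z)‖ ^ 2 + ‖b₁ - (z + z)‖ ^ 2) ∂κ)
          ≤ ∫ _z in B, (‖b₁‖ ^ 2 + ‖b₂‖ ^ 2 - 2 * σ * S) ∂κ :=
        setIntegral_mono_on (hIOn1.add hIOn1') hconstInt hBmeas hpt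
      have hIsum2 : (∫ _z in B, (‖b₁‖ ^ 2 + ‖b₂‖ ^ 2 - 2 * σ * S) ∂κ)
          = (‖b₁‖ ^ 2 + ‖b₂‖ ^ 2 - 2 * σ * S) * (κ B).toReal := by
        rw [setIntegral_const, measureReal_def, smul_eq_mul, mul_comm]
      have heq : (∫ z in B, (‖b₂ + (z + z)‖ ^ 2 + ‖b₁ - (z + z)‖ ^ 2) ∂κ)
          = (∫ z in B, ‖b₂ + (z + z)‖ ^ 2 ∂κ) + ∫ z in B, ‖b₁ - (z + z)‖ ^ 2 ∂κ :=
        integral_add hIOn1 hIOn1'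
      linarith [hIsum1, hIsum2, heq]
    have hκB₂ : κ B₂ = κ B := by
      rw [hB₂def, ← Measure.map_apply hnegmeas hBmeas, hnegmap]
    have hcompl : (κ Bᶜ).toReal = 1 - (κ B).toReal := by
      rw [measure_compl hBmeas (measure_ne_top _ _), measure_univ,
        ENNReal.toReal_sub_of_le prob_le_one ENNReal.one_ne_top, ENNReal.toReal_one]
    have hcompl₂ : (κ B₂ᶜ).toReal = 1 - (κ B).toReal := by
      rw [measure_compl hB₂meas (measure_ne_top _ _), measure_univ, hκB₂,
        ENNReal.toReal_sub_of_le prob_le_one ENNReal.one_ne_top, ENNReal.toReal_one]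
    have hr : (κ B).toReal = p0.toReal ^ d := by rw [hκB, ENNReal.toReal_pow]
    have hrnonneg : (0:ℝ) ≤ (κ B).toReal := ENNReal.toReal_nonneg
    have hrle : (κ B).toReal ≤ 1 := by
      rw [← ENNReal.toReal_one]
      exact ENNReal.toReal_mono ENNReal.one_ne_top prob_le_one
    have hfin : (∫ z, f (ψ₁ z) ∂κ) + (∫ z, f (ψ₂ z) ∂κ)
        ≤ ‖b₁‖ ^ 2 + ‖b₂‖ ^ 2 - 2 * σ * S * (κ B).toReal := by
      rw [hI₁, hI₂, hcompl, hcompl₂]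
      nlinarith [hIsum]
    rw [hcγ]
    have hmul := mul_le_mul_of_nonneg_left hfin (ENNReal.toReal_nonneg (a := lam))
    rw [hr] at hmul
    nlinarith [hmul]

/-- if some optimal plan is not a matching of atoms, the Gaussian
smoothing loss is at least linear in `σ`. -/
theorem stmt18 {d m n : ℕ} (x : Fin m → Ed d) (y : Fin n → Ed d)
    (hx : Function.Injective x) (hy : Function.Injective y)
    (αw : Fin m → ℝ≥0∞) (βw : Fin n → ℝ≥0∞)
    (hα : ∑ i, αw i = 1) (hβ : ∑ j, βw j = 1)
    (μ ν : Measure (Ed d))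
    (hμ : μ = ∑ i, αw i • Measure.dirac (x i))
    (hν : ν = ∑ j, βw j • Measure.dirac (y j))
    (π : Measure (Ed d × Ed d)) (hπ : π ∈ Couplings μ ν)
    (hopt : ∀ γ ∈ Couplings μ ν, cost π ≤ cost γ)
    (i₀ : Fin m) (j₁ j₂ : Fin n) (hyy : y j₁ ≠ y j₂)
    (h1 : 0 < π {(x i₀, y j₁)}) (h2 : 0 < π {(x i₀, y j₂)}) :
    ∃ c₀ > (0 : ℝ), ∃ C > (0 : ℝ), ∀ σ : ℝ, 0 < σ → σ < c₀ →
      C * σ ≤ W2sq μ ν - W2sq (mconv μ (gauss d σ)) (mconv ν (gauss d σ)) := by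
  classical
  have hfcont : Continuous (fun p : Ed d × Ed d => ‖p.1 - p.2‖ ^ 2) :=
    (continuous_fst.sub continuous_snd).norm.pow 2
  -- d is positive
  have hd : 0 < d := by
    rcases Nat.eq_zero_or_pos d with h0 | h
    · exfalso
      subst h0
      apply hyy
      ext i
      exact i.elim0
    · exact h
  -- total masses
  have hμuniv : μ Set.univ = 1 := by
    rw [hμ, Measure.finset_sum_apply]
    simp only [Measure.smul_apply, measure_univ, smul_eq_mul, mul_one]
    exact hα
  have hπuniv : π Set.univ = 1 := by
    have h := congrArg (fun m : Measure (Ed d) => m Set.univ) hπ.1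
    simp only [Measure.map_apply measurable_fst MeasurableSet.univ, Set.preimage_univ] at h
    rw [h, hμuniv]
  haveI hπprob : IsProbabilityMeasure π := ⟨hπuniv⟩
  -- W2sq μ ν = cost π
  have hW : W2sq μ ν = cost π := Stmt18Helpers.W2sq_eq_cost hπ hopt
  -- integrability of the cost function wrt π
  have hrx : MeasurableSet (Set.range x) := (Set.finite_range x).measurableSet
  have hry : MeasurableSet (Set.range y) := (Set.finite_range y).measurableSet
  have hx0 : π (Prod.fst ⁻¹' (Set.range x)ᶜ) = 0 := by
    rw [← Measure.map_apply measurable_fst hrx.compl, hπ.1, hμ, Measure.finset_sum_apply]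
    refine Finset.sum_eq_zero fun i _ => ?_
    rw [Measure.smul_apply, Measure.dirac_apply' _ hrx.compl]
    have hxi : x i ∈ Set.range x := ⟨i, rfl⟩
    rw [Set.indicator_of_notMem (by simpa using hxi)]
    simp
  have hy0 : π (Prod.snd ⁻¹' (Set.range y)ᶜ) = 0 := by
    rw [← Measure.map_apply measurable_snd hry.compl, hπ.2, hν, Measure.finset_sum_apply]
    refine Finset.sum_eq_zero fun j _ => ?_
    rw [Measure.smul_apply, Measure.dirac_apply' _ hry.compl]
    have hyj : y j ∈ Set.range y := ⟨j, rfl⟩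
    rw [Set.indicator_of_notMem (by simpa using hyj)]
    simp
  have hsupp : π ({p : Ed d × Ed d | p.1 ∈ Set.range x ∧ p.2 ∈ Set.range y} : Set _)ᶜ = 0 := by
    refine measure_mono_null (fun p hp => ?_) (measure_union_null hx0 hy0)
    simp only [Set.mem_compl_iff, Set.mem_setOf_eq, not_and_or] at hp
    rcases hp with h | h
    · exact Or.inl h
    · exact Or.inr h
  have hM : ∀ p : Ed d × Ed d, p.1 ∈ Set.range x → p.2 ∈ Set.range y →
      ‖p.1 - p.2‖ ^ 2 ≤ ∑ i, ∑ j, ‖x i - y j‖ ^ 2 := by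
    rintro p ⟨i, hi⟩ ⟨j, hj⟩
    rw [← hi, ← hj]
    calc ‖x i - y j‖ ^ 2 ≤ ∑ j', ‖x i - y j'‖ ^ 2 :=
          Finset.single_le_sum (f := fun j' => ‖x i - y j'‖ ^ 2)
            (fun j' _ => by positivity) (Finset.mem_univ j)
      _ ≤ ∑ i', ∑ j', ‖x i' - y j'‖ ^ 2 :=
          Finset.single_le_sum (f := fun i' => ∑ j', ‖x i' - y j'‖ ^ 2)
            (fun i' _ => Finset.sum_nonneg fun j' _ => by positivity) (Finset.mem_univ i)
  have hint : Integrable (fun p : Ed d × Ed d => ‖p.1 - p.2‖ ^ 2) π := by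
    refine (integrable_const (∑ i, ∑ j, ‖x i - y j‖ ^ 2)).mono'
      hfcont.aestronglyMeasurable ?_
    rw [ae_iff]
    refine measure_mono_null (fun p hp => ?_) hsupp
    simp only [Set.mem_setOf_eq] at hp
    simp only [Set.mem_compl_iff, Set.mem_setOf_eq]
    intro hc
    apply hp
    rw [Real.norm_of_nonneg (by positivity)]
    exact hM p hc.1 hc.2
  -- decomposition of π
  set p₁ : Ed d × Ed d := (x i₀, y j₁) with hp₁def
  set p₂ : Ed d × Ed d := (x i₀, y j₂) with hp₂def
  have hp12 : p₁ ≠ p₂ := fun h => hyy (congrArg Prod.snd h)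
  set lam : ℝ≥0∞ := min (π {p₁}) (π {p₂}) with hlamdef
  have hlam0 : lam ≠ 0 := (lt_min h1 h2).ne'
  have hlamtop : lam ≠ ⊤ := ((min_le_left _ _).trans_lt (measure_lt_top π _)).ne
  set π' : Measure (Ed d × Ed d) := π.restrict ({p₁, p₂} : Set (Ed d × Ed d))ᶜ
    + (π {p₁} - lam) • Measure.dirac p₁ + (π {p₂} - lam) • Measure.dirac p₂ with hπ'def
  have hmeas12 : MeasurableSet ({p₁, p₂} : Set (Ed d × Ed d)) :=
    (measurableSet_singleton p₂).insert p₁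
  have hdec : π = π' + lam • Measure.dirac p₁ + lam • Measure.dirac p₂ := by
    have hru : π.restrict {p₁, p₂}
        = π {p₁} • Measure.dirac p₁ + π {p₂} • Measure.dirac p₂ := by
      have hsu : ({p₁, p₂} : Set (Ed d × Ed d)) = {p₁} ∪ {p₂} := rfl
      rw [hsu, Measure.restrict_union (Set.disjoint_singleton.mpr hp12)
        (measurableSet_singleton _), Measure.restrict_singleton, Measure.restrict_singleton]
    have hsplit : π = π.restrict ({p₁, p₂} : Set (Ed d × Ed d))ᶜ + π.restrict {p₁, p₂} := by
      rw [add_comm, Measure.restrict_add_restrict_compl hmeas12]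
    have e1 : π {p₁} - lam + lam = π {p₁} := tsub_add_cancel_of_le (min_le_left _ _)
    have e2 : π {p₂} - lam + lam = π {p₂} := tsub_add_cancel_of_le (min_le_right _ _)
    calc π = π.restrict ({p₁, p₂} : Set (Ed d × Ed d))ᶜ
          + (π {p₁} • Measure.dirac p₁ + π {p₂} • Measure.dirac p₂) := by
          rw [← hru, ← hsplit]
      _ = π' + lam • Measure.dirac p₁ + lam • Measure.dirac p₂ := by
          rw [hπ'def]
          have e1' : (π {p₁} - lam) • Measure.dirac p₁ + lam • Measure.dirac p₁
              = π {p₁} • Measure.dirac p₁ := by rw [← add_smul, e1]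
          have e2' : (π {p₂} - lam) • Measure.dirac p₂ + lam • Measure.dirac p₂
              = π {p₂} • Measure.dirac p₂ := by rw [← add_smul, e2]
          rw [← e1', ← e2']
          abel
  have hπ'le : π' ≤ π := by
    have h := Measure.le_add_right (ν' := lam • Measure.dirac p₂)
      (Measure.le_add_right (ν' := lam • Measure.dirac p₁) (le_refl π'))
    rwa [← hdec] at h
  haveI hπ'fin : IsFiniteMeasure π' := isFiniteMeasure_of_le π hπ'le
  have hintπ' : Integrable (fun p : Ed d × Ed d => ‖p.1 - p.2‖ ^ 2) π' :=
    hint.mono_measure hπ'le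
  have hled1 : lam • Measure.dirac p₁ ≤ π := by
    have h : lam • Measure.dirac p₁ ≤ π' + lam • Measure.dirac p₁ + lam • Measure.dirac p₂ :=
      Measure.le_add_right (Measure.le_add_left (le_refl _))
    rwa [← hdec] at h
  have hled2 : lam • Measure.dirac p₂ ≤ π := by
    have h : lam • Measure.dirac p₂ ≤ π' + lam • Measure.dirac p₁ + lam • Measure.dirac p₂ :=
      Measure.le_add_left (le_refl _)
    rwa [← hdec] at h
  have hintd1 : Integrable (fun p : Ed d × Ed d => ‖p.1 - p.2‖ ^ 2) (lam • Measure.dirac p₁) :=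
    hint.mono_measure hled1
  have hintd2 : Integrable (fun p : Ed d × Ed d => ‖p.1 - p.2‖ ^ 2) (lam • Measure.dirac p₂) :=
    hint.mono_measure hled2
  have hcostπ : cost π = cost π'
      + lam.toReal * (‖x i₀ - y j₁‖ ^ 2 + ‖x i₀ - y j₂‖ ^ 2) := by
    show (∫ p, ‖p.1 - p.2‖ ^ 2 ∂π) = _
    rw [hdec, integral_add_measure (hintπ'.add_measure hintd1) hintd2,
      integral_add_measure hintπ' hintd1, integral_smul_measure, integral_smul_measure,
      integral_dirac, integral_dirac]
    show cost π' + lam.toReal • ‖x i₀ - y j₁‖ ^ 2 + lam.toReal • ‖x i₀ - y j₂‖ ^ 2 = _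
    rw [smul_eq_mul, smul_eq_mul]
    ring
  -- marginal decompositions
  have hμdec : μ = π'.map Prod.fst + lam • Measure.dirac (x i₀) + lam • Measure.dirac (x i₀) := by
    rw [← hπ.1]
    conv_lhs => rw [hdec]
    rw [Measure.map_add _ _ measurable_fst, Measure.map_add _ _ measurable_fst,
      Measure.map_smul, Measure.map_smul, Measure.map_dirac' measurable_fst,
      Measure.map_dirac' measurable_fst]
  have hνdec : ν = π'.map Prod.snd + lam • Measure.dirac (y j₁) + lam • Measure.dirac (y j₂) := by
    rw [← hπ.2]
    conv_lhs => rw [hdec]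
    rw [Measure.map_add _ _ measurable_snd, Measure.map_add _ _ measurable_snd,
      Measure.map_smul, Measure.map_smul, Measure.map_dirac' measurable_snd,
      Measure.map_dirac' measurable_snd]
  -- the constants
  have hSpos : 0 < ∑ i, |(y j₁ - y j₂) i| := by
    have hvne : y j₁ - y j₂ ≠ 0 := sub_ne_zero.mpr hyy
    have hex : ∃ i, (y j₁ - y j₂) i ≠ 0 := by
      by_contra hc
      push_neg at hc
      apply hvne
      ext i
      exact hc i
    obtain ⟨i, hi⟩ := hex
    exact Finset.sum_pos' (fun _ _ => abs_nonneg _) ⟨i, Finset.mem_univ i, abs_pos.mpr hi⟩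
  have hqpos : 0 < ((ProbabilityTheory.gaussianReal 0 1 (Set.Icc 1 2)).toReal) ^ d := by
    have hne : (ProbabilityTheory.gaussianReal 0 1) (Set.Icc 1 2) ≠ 0 := by
      intro h0
      have hac := ProbabilityTheory.gaussianReal_absolutelyContinuous' (0 : ℝ)
        (one_ne_zero : (1 : ℝ≥0) ≠ 0)
      have hv := hac h0
      rw [Real.volume_Icc] at hv
      norm_num at hv
    exact pow_pos (ENNReal.toReal_pos hne (measure_ne_top _ _)) d
  have hlamTpos : 0 < lam.toReal := ENNReal.toReal_pos hlam0 hlamtop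
  refine ⟨(∑ i, |(y j₁ - y j₂) i|) / (16 * d), by positivity,
    lam.toReal * (2 * (∑ i, |(y j₁ - y j₂) i|) *
      ((ProbabilityTheory.gaussianReal 0 1 (Set.Icc 1 2)).toReal) ^ d),
    by positivity, ?_⟩
  intro σ hσ0 hσc
  have h16d : (0 : ℝ) < 16 * d := by positivity
  have hσ' : σ * (16 * d) ≤ ∑ i, |(y j₁ - y j₂) i| := by
    have h := (lt_div_iff₀ h16d).mp hσc
    linarith
  obtain ⟨γ, hm1, hm2, hcγ⟩ := key (x i₀) (y j₁) (y j₂) hyy π' hintπ' lam hlamtop σ hσ0 hσ'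
  have hγC : γ ∈ Couplings (mconv μ (gauss d σ)) (mconv ν (gauss d σ)) := by
    constructor
    · rw [hm1, ← hμdec]
    · rw [hm2, ← hνdec]
  have hle := Stmt18Helpers.W2sq_le_cost hγC
  rw [hW]
  linarith [hle, hcγ, hcostπ]
end
end
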